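/- arXiv:2211.14455 — 8 statements merged into one kernel-verified Lean document; each statement's English description precedes it below -/
import Mathlib

section
/- Let Φ be a primal thermodynamic function on ℝ_{>0}^V with Bregman divergence D, let S ∈ ℝ^{V×E}, and let x ∈ P^sc(x₀), x_q ∈ M^eq(x̃), and x† the unique point of P^sc(x₀) ∩ M^eq(x̃). Then the generalized Pythagorean relation D[x‖x_q] = D[x‖x†] + D[x†‖x_q] holds. -/
open Matrix Filter Set

noncomputable def grad {n : ℕ} (F : (Fin n → ℝ) → ℝ) (x : Fin n → ℝ) : Fin n → ℝ :=
  fun i => fderiv ℝ F x (Pi.single i 1)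

def IsDissipation {n : ℕ} (Ψ : (Fin n → ℝ) → ℝ) : Prop :=
  StrictConvexOn ℝ Set.univ Ψ ∧ ContDiff ℝ 1 Ψ ∧
  Tendsto (fun f => Ψ f / ‖f‖) (Bornology.cobounded (Fin n → ℝ)) atTop ∧
  (∀ f, Ψ (-f) = Ψ f) ∧ Ψ 0 = 0

noncomputable def legendre {n : ℕ} (Ψ : (Fin n → ℝ) → ℝ) (j : Fin n → ℝ) : ℝ :=
  ⨆ f : Fin n → ℝ, (j ⬝ᵥ f - Ψ f)

noncomputable def breg {n : ℕ} (F : (Fin n → ℝ) → ℝ) (x x' : Fin n → ℝ) : ℝ :=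
  F x - F x' - (x - x') ⬝ᵥ grad F x'

def posOrth (n : ℕ) : Set (Fin n → ℝ) := {x | ∀ i, 0 < x i}

def IsThermo {n : ℕ} (Φ : (Fin n → ℝ) → ℝ) : Prop :=
  StrictConvexOn ℝ (posOrth n) Φ ∧
  (∀ x ∈ posOrth n, DifferentiableAt ℝ Φ x) ∧
  Set.BijOn (grad Φ) (posOrth n) Set.univ ∧
  (∀ xin ∈ posOrth n, ∀ xbd ∈ frontier {x : Fin n → ℝ | ∀ i, 0 ≤ x i},
    Tendsto (fun lam : ℝ => deriv (fun l : ℝ => Φ (l • xin + (1 - l) • xbd)) lam)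
      (nhdsWithin 0 (Set.Ioi 0)) atBot)

/-- Generalized Pythagorean relation D[x‖x_q] = D[x‖x†] + D[x†‖x_q] for
x ∈ P^sc(x₀), x_q ∈ M^eq(x̃), and x† the point of P^sc(x₀) ∩ M^eq(x̃). -/
theorem generalized_pythagorean_relation {V E : ℕ}
    (S : Matrix (Fin V) (Fin E) ℝ)
    (Φ : (Fin V → ℝ) → ℝ) (hΦ : IsThermo Φ)
    (x₀ xtil x xq xd : Fin V → ℝ)
    (hx₀ : x₀ ∈ posOrth V) (hxtil : xtil ∈ posOrth V)
    (hx : x ∈ posOrth V) (hxw : ∃ w, x - x₀ = S *ᵥ w)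
    (hxq : xq ∈ posOrth V) (hxqe : Sᵀ *ᵥ (grad Φ xq - grad Φ xtil) = 0)
    (hxd : xd ∈ posOrth V) (hxdw : ∃ w, xd - x₀ = S *ᵥ w)
    (hxde : Sᵀ *ᵥ (grad Φ xd - grad Φ xtil) = 0) :
    breg Φ x xq = breg Φ x xd + breg Φ xd xq := by
  obtain ⟨w, hw⟩ := hxw
  obtain ⟨w', hw'⟩ := hxdw
  have hxxd : x - xd = S *ᵥ (w - w') := by
    have : x - xd = (x - x₀) - (xd - x₀) := by abel
    rw [this, hw, hw', Matrix.mulVec_sub]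
  have hSt : Sᵀ *ᵥ (grad Φ xd - grad Φ xq) = 0 := by
    have : grad Φ xd - grad Φ xq =
        (grad Φ xd - grad Φ xtil) - (grad Φ xq - grad Φ xtil) := by abel
    rw [this, Matrix.mulVec_sub, hxde, hxqe, sub_zero]
  have key : (x - xd) ⬝ᵥ (grad Φ xd - grad Φ xq) = 0 := by
    rw [hxxd, dotProduct_comm, Matrix.dotProduct_mulVec,
      ← Matrix.mulVec_transpose, hSt, zero_dotProduct]
  unfold breg
  have expand : (x - xq) ⬝ᵥ grad Φ xq
      = (x - xd) ⬝ᵥ grad Φ xd + (xd - xq) ⬝ᵥ grad Φ xq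
        - (x - xd) ⬝ᵥ (grad Φ xd - grad Φ xq) := by
    simp only [sub_dotProduct, dotProduct_sub]
    ring
  rw [expand, key]
  ring
end

section
/- Information-geometric Helmholtz–Hodge–Kodaira decomposition: let Ψ* be a dissipation function on ℝ^E with conjugate Ψ, let S ∈ ℝ^{V×E}, and let (j,f) be a Legendre dual pair. Then: (i) there exists a unique j_eq ∈ ℝ^E such that S j_eq = S j and ∇Ψ(j_eq) ∈ Im Sᵀ, and j_eq is the unique minimizer of Ψ over the affine set {j' : S j' = S j}; in particular j − j_eq ∈ Ker S (divergence-free) and ∇Ψ(j_eq) ∈ Im Sᵀ (an equilibrium, curl-free force). (ii) Dually, there exists a unique f_st ∈ ℝ^E such that f − f_st ∈ Im Sᵀ and S ∇Ψ*(f_st) = 0, and f_st is the unique minimizer of Ψ* over the affine set {f'' : f'' − f ∈ Im Sᵀ}. -/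
open Matrix Filter Set

/-!
Both halves are the first-order optimality condition for a strictly convex, coercive function `F`
on an affine subspace `x₀ + Im Sᵀ`: a minimiser exists by coercivity, it is characterised by
`S ∇F = 0`, and strict convexity makes it unique and a strict minimiser. Part (ii) is the case
`F = Ψ*`, `x₀ = f`. Part (i) is the case `F = Ψ* - ⟨j, ·⟩`, `x₀ = 0`, with `j_eq := ∇Ψ*(w₀)` for
the minimiser `w₀`. It transfers to `Ψ` because `∇Ψ` inverts `∇Ψ*`: the maximiser in the
supremum defining `Ψ(j)` stays in a compact set for `j` near `j₀`, hence depends continuously on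
`j`, and this squeezes `Ψ` between affine functions. Minimality of `j_eq` is Fenchel–Young:
`Ψ(j') ≥ ⟨j', w₀⟩ - Ψ*(w₀) = ⟨j_eq, w₀⟩ - Ψ*(w₀) = Ψ(j_eq)` since `j' - j_eq ∈ Ker S ⊥ w₀`.
-/

open Topology

lemma StrictConvexOn.comp_affineMap {𝕜 E F β : Type*} [Field 𝕜] [LinearOrder 𝕜]
    [AddCommGroup E] [AddCommGroup F] [Module 𝕜 E] [Module 𝕜 F] [AddCommMonoid β] [PartialOrder β]
    [SMul 𝕜 β] {f : F → β} {s : Set F} (hf : StrictConvexOn 𝕜 s f) (g : E →ᵃ[𝕜] F)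
    (hg : Function.Injective g) : StrictConvexOn 𝕜 (g ⁻¹' s) (f ∘ g) :=
  ⟨hf.1.affine_preimage g, fun x hx y hy hxy a b ha hb hab => by
    simpa only [Function.comp, Convex.combo_affine_apply hab] using
      hf.2 hx hy (hg.ne hxy) ha hb hab⟩

namespace HHK

variable {n : ℕ}

noncomputable def dotProductCLM (w : Fin n → ℝ) : (Fin n → ℝ) →L[ℝ] ℝ :=
  LinearMap.toContinuousLinearMap (dotProductEquiv ℝ (Fin n) w)

@[simp] lemma dotProductCLM_apply (w v : Fin n → ℝ) : dotProductCLM w v = w ⬝ᵥ v := rfl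

lemma continuousLinearMap_apply_eq_dotProduct (L : (Fin n → ℝ) →L[ℝ] ℝ) (v : Fin n → ℝ) :
    L v = v ⬝ᵥ fun i => L (Pi.single i 1) := by
  conv_lhs => rw [← Finset.univ_sum_single v]
  rw [map_sum]
  refine Finset.sum_congr rfl fun i _ => ?_
  rw [← smul_eq_mul, ← map_smul, ← Pi.single_smul', smul_eq_mul, mul_one]

lemma fderiv_apply_eq_dotProduct_grad (F : (Fin n → ℝ) → ℝ) (x v : Fin n → ℝ) :
    fderiv ℝ F x v = v ⬝ᵥ grad F x :=
  continuousLinearMap_apply_eq_dotProduct _ v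

lemma _root_.HasFDerivAt.grad_eq {F : (Fin n → ℝ) → ℝ} {x w : Fin n → ℝ}
    (hF : HasFDerivAt F (dotProductCLM w) x) : grad F x = w := by
  ext i
  simp [grad, hF.fderiv]

lemma grad_sub_dotProduct {F : (Fin n → ℝ) → ℝ} {x : Fin n → ℝ} (hF : DifferentiableAt ℝ F x)
    (w : Fin n → ℝ) : grad (fun y => F y - w ⬝ᵥ y) x = grad F x - w := by
  have h : HasFDerivAt (fun y => F y - w ⬝ᵥ y) (fderiv ℝ F x - dotProductCLM w) x :=
    hF.hasFDerivAt.sub (dotProductCLM w).hasFDerivAt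
  ext i
  simp [grad, h.fderiv]

lemma _root_.IsLocalMin.grad_eq_zero {F : (Fin n → ℝ) → ℝ} {x : Fin n → ℝ} (h : IsLocalMin F x) :
    grad F x = 0 := by
  ext i
  simp [grad, h.fderiv_eq_zero]

lemma continuous_grad {F : (Fin n → ℝ) → ℝ} (hF : ContDiff ℝ 1 F) : Continuous (grad F) :=
  continuous_pi fun _ => (hF.continuous_fderiv one_ne_zero).clm_apply continuous_const

lemma hasDerivAt_comp_lineMap {F : (Fin n → ℝ) → ℝ} {x : Fin n → ℝ} (hF : DifferentiableAt ℝ F x)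
    (y : Fin n → ℝ) :
    HasDerivAt (fun t : ℝ => F (AffineMap.lineMap x y t)) ((y - x) ⬝ᵥ grad F x) 0 := by
  rw [← fderiv_apply_eq_dotProduct_grad]
  exact hF.hasFDerivAt.comp_hasDerivAt_of_eq 0 AffineMap.hasDerivAt_lineMap
    (AffineMap.lineMap_apply_zero x y).symm

lemma abs_dotProduct_le (v w : Fin n → ℝ) : |v ⬝ᵥ w| ≤ n * (‖v‖ * ‖w‖) := by
  calc |v ⬝ᵥ w| ≤ ∑ i, |v i| * |w i| := by
        simpa only [dotProduct, abs_mul] using Finset.abs_sum_le_sum_abs (fun i => v i * w i) _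
    _ ≤ ∑ _i : Fin n, ‖v‖ * ‖w‖ := by
        gcongr with i
        exacts [norm_le_pi_norm v i, norm_le_pi_norm w i]
    _ = n * (‖v‖ * ‖w‖) := by simp

section Convexity

variable {F : (Fin n → ℝ) → ℝ} {x y : Fin n → ℝ}

lemma _root_.StrictConvexOn.add_dotProduct_grad_lt (hF : StrictConvexOn ℝ univ F)
    (hd : DifferentiableAt ℝ F x) (hxy : x ≠ y) : F x + (y - x) ⬝ᵥ grad F x < F y := by
  have hline : StrictConvexOn ℝ univ (F ∘ AffineMap.lineMap x y) :=
    hF.comp_affineMap _ (AffineMap.lineMap_injective ℝ hxy)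
  have := hline.lt_slope_of_hasDerivAt (mem_univ 0) (mem_univ 1) one_pos
    (hasDerivAt_comp_lineMap hd y)
  simp only [slope_def_field, Function.comp_apply, AffineMap.lineMap_apply_one,
    AffineMap.lineMap_apply_zero, sub_zero, div_one] at this
  linarith

lemma _root_.StrictConvexOn.add_dotProduct_grad_le (hF : StrictConvexOn ℝ univ F)
    (hd : DifferentiableAt ℝ F x) (y : Fin n → ℝ) : F x + (y - x) ⬝ᵥ grad F x ≤ F y := by
  rcases eq_or_ne x y with rfl | hxy
  · simp
  · exact (hF.add_dotProduct_grad_lt hd hxy).le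

lemma _root_.StrictConvexOn.injective_grad (hF : StrictConvexOn ℝ univ F)
    (hd : Differentiable ℝ F) : Function.Injective (grad F) := by
  intro x y hxy
  by_contra hne
  have h₁ := hF.add_dotProduct_grad_lt (hd x) hne
  have h₂ := hF.add_dotProduct_grad_lt (hd y) (Ne.symm hne)
  rw [hxy] at h₁
  rw [← neg_sub, neg_dotProduct] at h₂
  linarith

end Convexity

section Coercivity

variable {F : (Fin n → ℝ) → ℝ}

lemma tendsto_sub_mul_norm_atTop
    (hF : Tendsto (fun x => F x / ‖x‖) (Bornology.cobounded _) atTop) (c : ℝ) :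
    Tendsto (fun x => F x - c * ‖x‖) (Bornology.cobounded _) atTop := by
  have h := (tendsto_atTop_add_const_right _ (-c) hF).atTop_mul_atTop₀ tendsto_norm_cobounded_atTop
  refine h.congr' ?_
  filter_upwards [Bornology.eventually_ne_cobounded (0 : Fin n → ℝ)] with x hx
  field_simp [norm_ne_zero_iff.mpr hx]
  ring

lemma tendsto_sub_dotProduct_atTop
    (hF : Tendsto (fun x => F x / ‖x‖) (Bornology.cobounded _) atTop) (w : Fin n → ℝ) :
    Tendsto (fun x => F x - w ⬝ᵥ x) (Bornology.cobounded _) atTop := by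
  refine tendsto_atTop_mono (fun x => ?_) (tendsto_sub_mul_norm_atTop hF (n * ‖w‖))
  have := (le_abs_self _).trans (abs_dotProduct_le w x)
  linarith

end Coercivity

section AffineMinimization

variable {m : Type*} [Fintype m] (S : Matrix m (Fin n) ℝ) {F : (Fin n → ℝ) → ℝ}
  {x y : Fin n → ℝ} {u : m → ℝ}

lemma transpose_mulVec_dotProduct (u : m → ℝ) (x : Fin n → ℝ) :
    (Sᵀ *ᵥ u) ⬝ᵥ x = u ⬝ᵥ (S *ᵥ x) := by
  rw [mulVec_transpose, dotProduct_mulVec]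

lemma mulVec_grad_eq_zero_of_forall_le (hd : DifferentiableAt ℝ F x)
    (hmin : ∀ u, F x ≤ F (x + Sᵀ *ᵥ u)) : S *ᵥ grad F x = 0 := by
  refine dotProduct_eq_zero _ fun v => ?_
  have hline : IsLocalMin (fun t : ℝ => F (AffineMap.lineMap x (x + Sᵀ *ᵥ v) t)) 0 :=
    Eventually.of_forall fun t => by
      simpa [AffineMap.lineMap_apply_module', add_comm, mulVec_smul] using hmin (t • v)
  rw [dotProduct_comm, ← transpose_mulVec_dotProduct, ← add_sub_cancel_left x (Sᵀ *ᵥ v)]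
  exact hline.hasDerivAt_eq_zero (hasDerivAt_comp_lineMap hd _)

lemma exists_mulVec_grad_eq_zero (hd : Differentiable ℝ F)
    (hF : Tendsto F (Bornology.cobounded _) atTop) (x₀ : Fin n → ℝ) :
    ∃ x, (∃ u, x - x₀ = Sᵀ *ᵥ u) ∧ S *ᵥ grad F x = 0 := by
  set C : Set (Fin n → ℝ) := {x | ∃ u, x - x₀ = Sᵀ *ᵥ u}
  have hC : IsClosed C := by
    have := (Submodule.closed_of_finiteDimensional (LinearMap.range Sᵀ.mulVecLin)).preimage
      (continuous_id.sub continuous_const : Continuous fun x => x - x₀)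
    convert this using 1
    ext x
    simp [C, eq_comm, mulVec_transpose]
  have hcoercive : ∀ᶠ x in cocompact _ ⊓ 𝓟 C, F x₀ ≤ F x := by
    rw [← Metric.cobounded_eq_cocompact]
    exact (hF.eventually_ge_atTop _).filter_mono inf_le_left
  obtain ⟨x, ⟨u, hu⟩, hmin⟩ :=
    hd.continuous.continuousOn.exists_isMinOn' hC ⟨0, by simp⟩ hcoercive
  refine ⟨x, ⟨u, hu⟩, mulVec_grad_eq_zero_of_forall_le S (hd x) fun v => hmin ⟨u + v, ?_⟩⟩
  rw [mulVec_add, ← hu]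
  abel

lemma _root_.StrictConvexOn.lt_of_mulVec_grad_eq_zero (hF : StrictConvexOn ℝ univ F)
    (hd : DifferentiableAt ℝ F x) (hx : S *ᵥ grad F x = 0) (hy : y - x = Sᵀ *ᵥ u)
    (hxy : x ≠ y) : F x < F y := by
  have h := hF.add_dotProduct_grad_lt hd hxy
  rwa [hy, transpose_mulVec_dotProduct, hx, dotProduct_zero, add_zero] at h

lemma _root_.StrictConvexOn.eq_of_mulVec_grad_eq_zero (hF : StrictConvexOn ℝ univ F)
    (hd : Differentiable ℝ F) (hx : S *ᵥ grad F x = 0) (hy : S *ᵥ grad F y = 0)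
    (hxy : y - x = Sᵀ *ᵥ u) : x = y := by
  by_contra hne
  have h₁ := hF.lt_of_mulVec_grad_eq_zero S (hd x) hx hxy hne
  have h₂ := hF.lt_of_mulVec_grad_eq_zero S (hd y) hy (u := -u)
    (by rw [mulVec_neg, ← hxy, neg_sub]) (Ne.symm hne)
  linarith

end AffineMinimization

section Legendre

variable {Ψ : (Fin n → ℝ) → ℝ} {j w : Fin n → ℝ}

lemma grad_eq_of_forall_le (hd : DifferentiableAt ℝ Ψ w)
    (hmax : ∀ g, j ⬝ᵥ g - Ψ g ≤ j ⬝ᵥ w - Ψ w) : grad Ψ w = j := by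
  have hmin : IsLocalMin (fun y => Ψ y - j ⬝ᵥ y) w :=
    Eventually.of_forall fun g => by linarith [hmax g]
  rw [← sub_eq_zero, ← grad_sub_dotProduct hd, hmin.grad_eq_zero]

lemma surjective_grad (hd : Differentiable ℝ Ψ)
    (hΨ : Tendsto (fun x => Ψ x / ‖x‖) (Bornology.cobounded _) atTop) :
    Function.Surjective (grad Ψ) := by
  intro j
  have hc : Continuous fun x => Ψ x - j ⬝ᵥ x := hd.continuous.sub (dotProductCLM j).continuous
  obtain ⟨w, hw⟩ := hc.exists_forall_le
    (Metric.cobounded_eq_cocompact (α := Fin n → ℝ) ▸ tendsto_sub_dotProduct_atTop hΨ j)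
  exact ⟨w, grad_eq_of_forall_le (hd w) fun g => by linarith [hw g]⟩

variable (hΨ : StrictConvexOn ℝ univ Ψ) (hd : Differentiable ℝ Ψ)
include hΨ hd

lemma dotProduct_sub_le_of_grad_eq (hw : grad Ψ w = j) (g : Fin n → ℝ) :
    j ⬝ᵥ g - Ψ g ≤ j ⬝ᵥ w - Ψ w := by
  have := hΨ.add_dotProduct_grad_le (hd w) g
  rw [hw, sub_dotProduct, dotProduct_comm g, dotProduct_comm w] at this
  linarith

lemma legendre_eq_of_grad_eq (hw : grad Ψ w = j) : legendre Ψ j = j ⬝ᵥ w - Ψ w :=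
  le_antisymm (ciSup_le (dotProduct_sub_le_of_grad_eq hΨ hd hw))
    (le_ciSup ⟨_, forall_mem_range.mpr (dotProduct_sub_le_of_grad_eq hΨ hd hw)⟩ w)

lemma le_legendre (hw : grad Ψ w = j) (g : Fin n → ℝ) : j ⬝ᵥ g - Ψ g ≤ legendre Ψ j :=
  legendre_eq_of_grad_eq hΨ hd hw ▸ dotProduct_sub_le_of_grad_eq hΨ hd hw g

lemma legendre_lt_legendre {j' w' : Fin n → ℝ} (hw : grad Ψ w = j) (hw' : grad Ψ w' = j')
    (horth : (j' - j) ⬝ᵥ w = 0) (hne : j ≠ j') : legendre Ψ j < legendre Ψ j' := by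
  rw [sub_dotProduct, sub_eq_zero] at horth
  rw [legendre_eq_of_grad_eq hΨ hd hw, ← horth]
  refine lt_of_le_of_ne (le_legendre hΨ hd hw' w) fun heq => hne ?_
  rw [← hw]
  exact grad_eq_of_forall_le (hd w) fun g => heq ▸ le_legendre hΨ hd hw' g

variable {G : (Fin n → ℝ) → (Fin n → ℝ)} (hG : ∀ j, grad Ψ (G j) = j)
include hG

lemma abs_legendre_sub_sub_le (j j₀ : Fin n → ℝ) :
    |legendre Ψ j - legendre Ψ j₀ - G j₀ ⬝ᵥ (j - j₀)| ≤ n * (‖j - j₀‖ * ‖G j - G j₀‖) := by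
  have h₁ := le_legendre hΨ hd (hG j) (G j₀)
  have h₂ := le_legendre hΨ hd (hG j₀) (G j)
  have hbound := abs_dotProduct_le (j - j₀) (G j - G j₀)
  rw [legendre_eq_of_grad_eq hΨ hd (hG j₀)] at h₂ ⊢
  rw [legendre_eq_of_grad_eq hΨ hd (hG j)] at h₁ ⊢
  rw [abs_le] at hbound ⊢
  simp only [dotProduct_sub, dotProduct_comm _ (G j₀), dotProduct_comm _ (G j)]
    at h₁ h₂ hbound ⊢
  constructor <;> linarith

lemma exists_isCompact_eventually_mem
    (hco : Tendsto (fun x => Ψ x / ‖x‖) (Bornology.cobounded _) atTop) (j₀ : Fin n → ℝ) :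
    ∃ K, IsCompact K ∧ ∀ᶠ j in 𝓝 j₀, G j ∈ K := by
  refine ⟨{x | Ψ x - n * (‖j₀‖ + 1) * ‖x‖ ≤ Ψ 0}, Metric.isCompact_of_isClosed_isBounded
    (isClosed_le (hd.continuous.sub (continuous_const.mul continuous_norm)) continuous_const)
    (Bornology.isBounded_def.mpr ?_), ?_⟩
  · filter_upwards [(tendsto_sub_mul_norm_atTop hco _).eventually_gt_atTop (Ψ 0)] with x hx
    exact not_le.mpr hx
  · filter_upwards [Metric.ball_mem_nhds j₀ one_pos] with j hj
    have hFY := dotProduct_sub_le_of_grad_eq hΨ hd (hG j) 0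
    have hnorm : ‖j‖ ≤ ‖j₀‖ + 1 := by
      linarith [norm_le_norm_add_norm_sub' j j₀, (mem_ball_iff_norm.mp hj).le]
    have hdot : j ⬝ᵥ G j ≤ n * (‖j₀‖ + 1) * ‖G j‖ :=
      calc j ⬝ᵥ G j ≤ n * (‖j‖ * ‖G j‖) := (le_abs_self _).trans (abs_dotProduct_le _ _)
        _ ≤ n * (‖j₀‖ + 1) * ‖G j‖ := by rw [← mul_assoc]; gcongr
    rw [dotProduct_zero] at hFY
    show Ψ (G j) - n * (‖j₀‖ + 1) * ‖G j‖ ≤ Ψ 0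
    linarith

end Legendre

section LegendreGrad

variable {Ψ : (Fin n → ℝ) → ℝ} (hΨ : StrictConvexOn ℝ univ Ψ) (hcd : ContDiff ℝ 1 Ψ)
  (hco : Tendsto (fun x => Ψ x / ‖x‖) (Bornology.cobounded _) atTop)
include hΨ hcd hco

lemma continuous_of_grad_comp_eq_id {G : (Fin n → ℝ) → (Fin n → ℝ)}
    (hG : ∀ j, grad Ψ (G j) = j) : Continuous G := by
  have hd := hcd.differentiable one_ne_zero
  refine continuous_iff_continuousAt.mpr fun j₀ => ?_
  obtain ⟨K, hK, hGK⟩ := exists_isCompact_eventually_mem hΨ hd hG hco j₀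
  refine hK.tendsto_nhds_of_unique_mapClusterPt hGK fun x _ hx => hΨ.injective_grad hd ?_
  have hclust : MapClusterPt (grad Ψ x) (𝓝 j₀) (grad Ψ ∘ G) :=
    hx.continuousAt_comp (continuous_grad hcd).continuousAt
  rw [show grad Ψ ∘ G = id from funext hG, mapClusterPt_id_iff] at hclust
  rw [hG j₀, eq_of_nhds_neBot hclust]

lemma hasFDerivAt_legendre {G : (Fin n → ℝ) → (Fin n → ℝ)} (hG : ∀ j, grad Ψ (G j) = j)
    (j₀ : Fin n → ℝ) : HasFDerivAt (legendre Ψ) (dotProductCLM (G j₀)) j₀ := by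
  have hlim : Tendsto (fun j => n * ‖G j - G j₀‖) (𝓝 j₀) (𝓝 0) := by
    simpa using
      (((continuous_of_grad_comp_eq_id hΨ hcd hco hG).tendsto j₀).sub_const (G j₀)).norm.const_mul
        (n : ℝ)
  rw [hasFDerivAt_iff_isLittleO, Asymptotics.isLittleO_iff]
  intro c hc
  filter_upwards [hlim.eventually (Iic_mem_nhds hc)] with j hj
  rw [Real.norm_eq_abs, dotProductCLM_apply]
  calc _ ≤ n * (‖j - j₀‖ * ‖G j - G j₀‖) :=
        abs_legendre_sub_sub_le hΨ (hcd.differentiable one_ne_zero) hG j j₀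
    _ = n * ‖G j - G j₀‖ * ‖j - j₀‖ := by ring
    _ ≤ c * ‖j - j₀‖ := by gcongr

lemma grad_legendre_grad (w : Fin n → ℝ) : grad (legendre Ψ) (grad Ψ w) = w := by
  have hd := hcd.differentiable one_ne_zero
  choose G hG using surjective_grad hd hco
  rw [(hasFDerivAt_legendre hΨ hcd hco hG _).grad_eq]
  exact hΨ.injective_grad hd (hG _)

end LegendreGrad

section Decomposition

variable {m : Type*} [Fintype m] (S : Matrix m (Fin n) ℝ)

lemma exists_steadyForce {F : (Fin n → ℝ) → ℝ} (hF : StrictConvexOn ℝ univ F)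
    (hd : Differentiable ℝ F) (hco : Tendsto F (Bornology.cobounded _) atTop)
    (f : Fin n → ℝ) :
    ∃ fst : Fin n → ℝ,
      ((∃ u, f - fst = Sᵀ *ᵥ u) ∧ S *ᵥ grad F fst = 0) ∧
      (∀ f' : Fin n → ℝ, ((∃ u, f - f' = Sᵀ *ᵥ u) ∧ S *ᵥ grad F f' = 0) → f' = fst) ∧
      (∀ f'' : Fin n → ℝ, (∃ u, f'' - f = Sᵀ *ᵥ u) → f'' ≠ fst → F fst < F f'') := by
  obtain ⟨fst, ⟨u, hu⟩, hfst⟩ := exists_mulVec_grad_eq_zero S hd hco f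
  refine ⟨fst, ⟨⟨-u, by rw [mulVec_neg, ← hu, neg_sub]⟩, hfst⟩, ?_, ?_⟩
  · rintro f' ⟨⟨u', hu'⟩, hf'⟩
    refine (hF.eq_of_mulVec_grad_eq_zero S hd hfst hf' (u := -u' - u) ?_).symm
    rw [mulVec_sub, mulVec_neg, ← hu', ← hu]
    abel
  · rintro f'' ⟨u'', hu''⟩ hne
    refine hF.lt_of_mulVec_grad_eq_zero S (hd fst) hfst (u := u'' - u) ?_ hne.symm
    rw [mulVec_sub, ← hu'', ← hu]
    abel

lemma exists_equilibriumFlux {Ψ : (Fin n → ℝ) → ℝ} (hΨ : StrictConvexOn ℝ univ Ψ)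
    (hcd : ContDiff ℝ 1 Ψ) (hco : Tendsto (fun x => Ψ x / ‖x‖) (Bornology.cobounded _) atTop)
    (j : Fin n → ℝ) :
    ∃ jeq : Fin n → ℝ,
      (S *ᵥ jeq = S *ᵥ j ∧ (∃ u, grad (legendre Ψ) jeq = Sᵀ *ᵥ u)) ∧
      (∀ j' : Fin n → ℝ,
        (S *ᵥ j' = S *ᵥ j ∧ (∃ u, grad (legendre Ψ) j' = Sᵀ *ᵥ u)) → j' = jeq) ∧
      (∀ j' : Fin n → ℝ, S *ᵥ j' = S *ᵥ j → j' ≠ jeq → legendre Ψ jeq < legendre Ψ j') := by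
  have hd := hcd.differentiable one_ne_zero
  set Fj : (Fin n → ℝ) → ℝ := fun w => Ψ w - j ⬝ᵥ w
  have hFj : StrictConvexOn ℝ univ Fj :=
    hΨ.sub_concaveOn ((dotProductCLM j).toLinearMap.concaveOn convex_univ)
  have hFjd : Differentiable ℝ Fj := hd.sub (dotProductCLM j).differentiable
  have hgrad : ∀ w, S *ᵥ grad Fj w = 0 ↔ S *ᵥ grad Ψ w = S *ᵥ j := fun w => by
    rw [grad_sub_dotProduct (hd w), mulVec_sub, sub_eq_zero]
  obtain ⟨w₀, ⟨u₀, hu₀⟩, hw₀⟩ :=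
    exists_mulVec_grad_eq_zero S hFjd (tendsto_sub_dotProduct_atTop hco j) 0
  rw [sub_zero] at hu₀
  subst hu₀
  have hSw₀ := (hgrad _).mp hw₀
  refine ⟨grad Ψ (Sᵀ *ᵥ u₀), ⟨hSw₀, u₀, grad_legendre_grad hΨ hcd hco _⟩, ?_, ?_⟩
  · rintro j' ⟨hj', u, hu⟩
    obtain ⟨w, rfl⟩ := surjective_grad hd hco j'
    rw [grad_legendre_grad hΨ hcd hco] at hu
    rw [hFj.eq_of_mulVec_grad_eq_zero S hFjd ((hgrad w).mpr hj') hw₀ (u := u₀ - u)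
      (by rw [mulVec_sub, hu])]
  · intro j' hj' hne
    obtain ⟨w', rfl⟩ := surjective_grad hd hco j'
    refine legendre_lt_legendre hΨ hd rfl rfl ?_ hne.symm
    rw [dotProduct_comm, transpose_mulVec_dotProduct, mulVec_sub, hj', hSw₀, sub_self,
      dotProduct_zero]

end Decomposition

end HHK

theorem information_geometric_HHK_decomposition_general {V E : ℕ}
    (S : Matrix (Fin V) (Fin E) ℝ)
    (Ψstar : (Fin E → ℝ) → ℝ) (h : IsDissipation Ψstar)
    (j f : Fin E → ℝ) :
    (∃ jeq : Fin E → ℝ,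
      (S *ᵥ jeq = S *ᵥ j ∧ (∃ u, grad (legendre Ψstar) jeq = Sᵀ *ᵥ u)) ∧
      (∀ j' : Fin E → ℝ,
        (S *ᵥ j' = S *ᵥ j ∧ (∃ u, grad (legendre Ψstar) j' = Sᵀ *ᵥ u)) → j' = jeq) ∧
      (∀ j' : Fin E → ℝ, S *ᵥ j' = S *ᵥ j → j' ≠ jeq →
        legendre Ψstar jeq < legendre Ψstar j')) ∧
    (∃ fst : Fin E → ℝ,
      ((∃ u, f - fst = Sᵀ *ᵥ u) ∧ S *ᵥ grad Ψstar fst = 0) ∧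
      (∀ f' : Fin E → ℝ,
        ((∃ u, f - f' = Sᵀ *ᵥ u) ∧ S *ᵥ grad Ψstar f' = 0) → f' = fst) ∧
      (∀ f'' : Fin E → ℝ, (∃ u, f'' - f = Sᵀ *ᵥ u) → f'' ≠ fst →
        Ψstar fst < Ψstar f'')) := by
  obtain ⟨hΨ, hcd, hco, -, -⟩ := h
  have hcoercive : Tendsto Ψstar (Bornology.cobounded _) atTop := by
    simpa using HHK.tendsto_sub_mul_norm_atTop hco 0
  exact ⟨HHK.exists_equilibriumFlux S hΨ hcd hco j,
    HHK.exists_steadyForce S hΨ (hcd.differentiable one_ne_zero) hcoercive f⟩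

/-- Information-geometric Helmholtz–Hodge–Kodaira decomposition: unique
equilibrium flux j_eq with S j_eq = S j and ∇Ψ(j_eq) ∈ Im Sᵀ, which is the unique minimizer
of Ψ on the iso-velocity class; dually, a unique steady force f_st with f − f_st ∈ Im Sᵀ and
S ∇Ψ*(f_st) = 0, the unique minimizer of Ψ* on the iso-force class. -/
theorem information_geometric_HHK_decomposition {V E : ℕ}
    (S : Matrix (Fin V) (Fin E) ℝ)
    (Ψstar : (Fin E → ℝ) → ℝ) (h : IsDissipation Ψstar)
    (j f : Fin E → ℝ) (hpair : j = grad Ψstar f) :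
    (∃ jeq : Fin E → ℝ,
      (S *ᵥ jeq = S *ᵥ j ∧ (∃ u, grad (legendre Ψstar) jeq = Sᵀ *ᵥ u)) ∧
      (∀ j' : Fin E → ℝ,
        (S *ᵥ j' = S *ᵥ j ∧ (∃ u, grad (legendre Ψstar) j' = Sᵀ *ᵥ u)) → j' = jeq) ∧
      (∀ j' : Fin E → ℝ, S *ᵥ j' = S *ᵥ j → j' ≠ jeq →
        legendre Ψstar jeq < legendre Ψstar j')) ∧
    (∃ fst : Fin E → ℝ,
      ((∃ u, f - fst = Sᵀ *ᵥ u) ∧ S *ᵥ grad Ψstar fst = 0) ∧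
      (∀ f' : Fin E → ℝ,
        ((∃ u, f - f' = Sᵀ *ᵥ u) ∧ S *ᵥ grad Ψstar f' = 0) → f' = fst) ∧
      (∀ f'' : Fin E → ℝ, (∃ u, f'' - f = Sᵀ *ᵥ u) → f'' ≠ fst →
        Ψstar fst < Ψstar f'')) :=
  information_geometric_HHK_decomposition_general S Ψstar h j f
end

section
/- Let Ψ* be a dissipation function on ℝ^E with conjugate Ψ, let S ∈ ℝ^{V×E}, let j ∈ ℝ^E, and let j_eq be the unique element with S j_eq = S j and ∇Ψ(j_eq) ∈ Im Sᵀ. Then for every j' with S j' = S j, the Pythagorean relation Ψ(j') = D^J[j'‖j_eq] + Ψ(j_eq) holds, where D^J[a‖b] := Ψ(a) − Ψ(b) − ⟨a − b, ∇Ψ(b)⟩ is the Bregman divergence of Ψ. Dually, for f ∈ ℝ^E and f_st the unique element with f − f_st ∈ Im Sᵀ and S∇Ψ*(f_st) = 0, every f'' with f'' − f ∈ Im Sᵀ satisfies Ψ*(f'') = D^F[f''‖f_st] + Ψ*(f_st), where D^F is the Bregman divergence of Ψ*. -/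
open Matrix Filter Set

/-- Pythagorean relations in the edge spaces: Ψ(j') = D^J[j'‖j_eq] + Ψ(j_eq) on
the iso-velocity class, and Ψ*(f'') = D^F[f''‖f_st] + Ψ*(f_st) on the iso-force class. -/
theorem edge_space_pythagorean_relations {V E : ℕ}
    (S : Matrix (Fin V) (Fin E) ℝ)
    (Ψstar : (Fin E → ℝ) → ℝ) (h : IsDissipation Ψstar)
    (j jeq : Fin E → ℝ)
    (hjeq1 : S *ᵥ jeq = S *ᵥ j)
    (hjeq2 : ∃ u, grad (legendre Ψstar) jeq = Sᵀ *ᵥ u)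
    (hjequniq : ∀ j', (S *ᵥ j' = S *ᵥ j ∧ (∃ u, grad (legendre Ψstar) j' = Sᵀ *ᵥ u)) → j' = jeq)
    (f fst : Fin E → ℝ)
    (hfst1 : ∃ u, f - fst = Sᵀ *ᵥ u)
    (hfst2 : S *ᵥ grad Ψstar fst = 0)
    (hfstuniq : ∀ f', ((∃ u, f - f' = Sᵀ *ᵥ u) ∧ S *ᵥ grad Ψstar f' = 0) → f' = fst) :
    (∀ j' : Fin E → ℝ, S *ᵥ j' = S *ᵥ j →
      legendre Ψstar j' = breg (legendre Ψstar) j' jeq + legendre Ψstar jeq) ∧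
    (∀ f'' : Fin E → ℝ, (∃ u, f'' - f = Sᵀ *ᵥ u) →
      Ψstar f'' = breg Ψstar f'' fst + Ψstar fst) := by
  constructor
  · intro j' hj'
    obtain ⟨u, hu⟩ := hjeq2
    have hker : S *ᵥ (j' - jeq) = 0 := by
      rw [Matrix.mulVec_sub, hj', hjeq1, sub_self]
    have : (j' - jeq) ⬝ᵥ grad (legendre Ψstar) jeq = 0 := by
      rw [hu, Matrix.dotProduct_mulVec, Matrix.vecMul_transpose, hker,
        zero_dotProduct]
    simp [breg, this]
  · intro f'' ⟨u, hu⟩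
    obtain ⟨u', hu'⟩ := hfst1
    have him : f'' - fst = Sᵀ *ᵥ (u + u') := by
      have : f'' - fst = (f'' - f) + (f - fst) := by ring
      rw [this, hu, hu', Matrix.mulVec_add]
    have : (f'' - fst) ⬝ᵥ grad Ψstar fst = 0 := by
      rw [him, Matrix.mulVec_transpose, ← Matrix.dotProduct_mulVec, hfst2,
        dotProduct_zero]
    simp [breg, this]
end

section
/- Positive decomposition via pseudo-Hilbert-isosceles orthogonality: let Ψ* be a dissipation function on ℝ^E with conjugate Ψ, let (j,f) be a Legendre dual pair, and let j' ∈ ℝ^E satisfy Ψ(j') = Ψ(j). Set j_S := (j + j')/2 and j_A := (j − j')/2, so j = j_S + j_A. Then ⟨j_S, f⟩ = ½ D^{J,F}[j'; −f] ≥ 0 and ⟨j_A, f⟩ = ½ D^{J,F}[j'; f] ≥ 0, where D^{J,F}[a; b] := Ψ(a) + Ψ*(b) − ⟨a,b⟩. Dually, if (j,f) is a Legendre dual pair and f'' satisfies Ψ*(f'') = Ψ*(f), then with f_S := (f + f'')/2, f_A := (f − f'')/2 one has ⟨j, f_S⟩ = ½ D^{J,F}[j; −f''] ≥ 0 and ⟨j,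 f_A⟩ = ½ D^{J,F}[j; f''] ≥ 0. -/
/-!
For a Legendre dual pair `(j, f)` the Fenchel–Young inequality is an equality,
`Ψ(j) + Ψ*(f) = ⟨j, f⟩`: by convexity of `Ψ*` the supremum defining `Ψ(j)` is attained at `f`.
Hence if `Ψ(j') = Ψ(j)` and `Ψ*(f') = Ψ*(f)`, then `D^{J,F}[j'; f'] = ⟨j, f⟩ - ⟨j', f'⟩`.
Taking `f' = ±f` (symmetry of `Ψ*` gives `Ψ*(-f) = Ψ*(f)`), resp. `j' = j` and `f' = ±f''`,
turns the four pairings into half mixed divergences, which are nonnegative because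
1-coercivity makes the supremum defining `Ψ` finite.
-/

open Matrix Filter Set

/-- Mixed Bregman (Fenchel–Young) divergence D^{J,F}[a; b] := Ψ(a) + Ψ*(b) − ⟨a,b⟩. -/
noncomputable def bregJF {n : ℕ} (Ψstar : (Fin n → ℝ) → ℝ) (a b : Fin n → ℝ) : ℝ :=
  legendre Ψstar a + Ψstar b - a ⬝ᵥ b

section NormedSpace

variable {E : Type*} [NormedAddCommGroup E] [NormedSpace ℝ E] {Φ : E → ℝ}

theorem ConvexOn.fderiv_apply_sub_le (hc : ConvexOn ℝ univ Φ) {x : E}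
    (hd : DifferentiableAt ℝ Φ x) (y : E) : fderiv ℝ Φ x (y - x) ≤ Φ y - Φ x := by
  have hline : HasDerivAt (Φ ∘ AffineMap.lineMap (k := ℝ) x y) (fderiv ℝ Φ x (y - x)) 0 := by
    refine HasFDerivAt.comp_hasDerivAt (0 : ℝ) ?_ AffineMap.hasDerivAt_lineMap
    simpa using hd.hasFDerivAt
  simpa [slope_def_field] using
    (hc.comp_affineMap (AffineMap.lineMap (k := ℝ) x y)).le_slope_of_hasDerivAt
      (mem_univ 0) (mem_univ 1) one_pos hline

theorem tendsto_sub_continuousLinearMap_of_superlinear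
    (hΦ : Tendsto (fun x => Φ x / ‖x‖) (Bornology.cobounded E) atTop) (ℓ : E →L[ℝ] ℝ) :
    Tendsto (fun x => Φ x - ℓ x) (Bornology.cobounded E) atTop := by
  refine tendsto_atTop_mono' _ ?_ tendsto_norm_cobounded_atTop
  filter_upwards [hΦ.eventually_ge_atTop (‖ℓ‖ + 1),
    tendsto_norm_cobounded_atTop.eventually_gt_atTop 0] with x hx hpos
  have hΦx := (le_div_iff₀ hpos).mp hx
  have hℓx : ℓ x ≤ ‖ℓ‖ * ‖x‖ := (le_abs_self _).trans (ℓ.le_opNorm x)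
  linarith

theorem bddAbove_range_sub_of_superlinear [ProperSpace E] (hc : Continuous Φ)
    (hΦ : Tendsto (fun x => Φ x / ‖x‖) (Bornology.cobounded E) atTop) (ℓ : E →L[ℝ] ℝ) :
    BddAbove (range fun x => ℓ x - Φ x) := by
  obtain ⟨x₀, hx₀⟩ := (hc.sub ℓ.continuous).exists_forall_le
    ((tendsto_sub_continuousLinearMap_of_superlinear hΦ ℓ).mono_left
      Metric.cobounded_eq_cocompact.ge)
  refine ⟨ℓ x₀ - Φ x₀, forall_mem_range.2 fun x => ?_⟩
  linarith [show Φ x₀ - ℓ x₀ ≤ Φ x - ℓ x from hx₀ x]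

end NormedSpace

section Legendre

variable {n : ℕ} {Φ : (Fin n → ℝ) → ℝ}

theorem grad_dotProduct (x v : Fin n → ℝ) : grad Φ x ⬝ᵥ v = fderiv ℝ Φ x v := by
  conv_rhs => rw [pi_eq_sum_univ' v]
  simp [grad, dotProduct, mul_comm]

theorem le_legendre (hc : Continuous Φ)
    (hΦ : Tendsto (fun x => Φ x / ‖x‖) (Bornology.cobounded (Fin n → ℝ)) atTop)
    (a b : Fin n → ℝ) : a ⬝ᵥ b - Φ b ≤ legendre Φ a :=
  le_ciSup (bddAbove_range_sub_of_superlinear hc hΦ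
    (dotProductBilin ℝ ℝ a).toContinuousLinearMap) b

theorem bregJF_nonneg (hc : Continuous Φ)
    (hΦ : Tendsto (fun x => Φ x / ‖x‖) (Bornology.cobounded (Fin n → ℝ)) atTop)
    (a b : Fin n → ℝ) : 0 ≤ bregJF Φ a b := by
  rw [bregJF]
  linarith [le_legendre hc hΦ a b]

theorem legendre_grad (hc : ConvexOn ℝ univ Φ) {f : Fin n → ℝ} (hd : DifferentiableAt ℝ Φ f) :
    legendre Φ (grad Φ f) = grad Φ f ⬝ᵥ f - Φ f := by
  have hmax : ∀ g, grad Φ f ⬝ᵥ g - Φ g ≤ grad Φ f ⬝ᵥ f - Φ f := fun g => by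
    have := hc.fderiv_apply_sub_le hd g
    rw [← grad_dotProduct, dotProduct_sub] at this
    linarith
  exact le_antisymm (ciSup_le hmax) (le_ciSup ⟨_, forall_mem_range.2 hmax⟩ f)

theorem bregJF_grad_self (hc : ConvexOn ℝ univ Φ) {f : Fin n → ℝ}
    (hd : DifferentiableAt ℝ Φ f) : bregJF Φ (grad Φ f) f = 0 := by
  rw [bregJF, legendre_grad hc hd]
  ring

theorem bregJF_eq_dotProduct_sub_of_bregJF_eq_zero {j f j' f' : Fin n → ℝ}
    (hjf : bregJF Φ j f = 0) (hj : legendre Φ j' = legendre Φ j) (hf : Φ f' = Φ f) :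
    bregJF Φ j' f' = j ⬝ᵥ f - j' ⬝ᵥ f' := by
  rw [bregJF] at hjf ⊢
  rw [hj, hf]
  linarith

end Legendre

/-- Positive decomposition of the bilinear pairing via pseudo-Hilbert-isosceles
orthogonality, for fluxes on the same central affine manifold and dually for forces. -/
theorem pseudo_hilbert_isosceles_positive_decomposition {n : ℕ}
    (Ψstar : (Fin n → ℝ) → ℝ) (h : IsDissipation Ψstar) :
    (∀ j f j' : Fin n → ℝ, j = grad Ψstar f →
      legendre Ψstar j' = legendre Ψstar j →
      (((1/2 : ℝ) • (j + j')) ⬝ᵥ f = (1/2 : ℝ) * bregJF Ψstar j' (-f) ∧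
        0 ≤ ((1/2 : ℝ) • (j + j')) ⬝ᵥ f) ∧
      (((1/2 : ℝ) • (j - j')) ⬝ᵥ f = (1/2 : ℝ) * bregJF Ψstar j' f ∧
        0 ≤ ((1/2 : ℝ) • (j - j')) ⬝ᵥ f)) ∧
    (∀ j f f'' : Fin n → ℝ, j = grad Ψstar f →
      Ψstar f'' = Ψstar f →
      (j ⬝ᵥ ((1/2 : ℝ) • (f + f'')) = (1/2 : ℝ) * bregJF Ψstar j (-f'') ∧
        0 ≤ j ⬝ᵥ ((1/2 : ℝ) • (f + f''))) ∧
      (j ⬝ᵥ ((1/2 : ℝ) • (f - f'')) = (1/2 : ℝ) * bregJF Ψstar j f'' ∧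
        0 ≤ j ⬝ᵥ ((1/2 : ℝ) • (f - f'')))) := by
  obtain ⟨hconv, hsmooth, hcoercive, hsymm, -⟩ := h
  have hnonneg := bregJF_nonneg hsmooth.continuous hcoercive
  have hpair : ∀ f, bregJF Ψstar (grad Ψstar f) f = 0 := fun f =>
    bregJF_grad_self hconv.convexOn (hsmooth.differentiable one_ne_zero f)
  refine ⟨fun j f j' hj hlevel => ?_, fun j f f'' hj hlevel => ?_⟩ <;> subst hj
  · have hS : ((1/2 : ℝ) • (grad Ψstar f + j')) ⬝ᵥ f = (1/2 : ℝ) * bregJF Ψstar j' (-f) := by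
      rw [bregJF_eq_dotProduct_sub_of_bregJF_eq_zero (hpair f) hlevel (hsymm f)]
      simp only [smul_dotProduct, add_dotProduct, dotProduct_neg, smul_eq_mul]
      ring
    have hA : ((1/2 : ℝ) • (grad Ψstar f - j')) ⬝ᵥ f = (1/2 : ℝ) * bregJF Ψstar j' f := by
      rw [bregJF_eq_dotProduct_sub_of_bregJF_eq_zero (hpair f) hlevel rfl]
      simp only [smul_dotProduct, sub_dotProduct, smul_eq_mul]
    exact ⟨⟨hS, hS ▸ by linarith [hnonneg j' (-f)]⟩, hA, hA ▸ by linarith [hnonneg j' f]⟩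
  · have hS : grad Ψstar f ⬝ᵥ ((1/2 : ℝ) • (f + f'')) =
        (1/2 : ℝ) * bregJF Ψstar (grad Ψstar f) (-f'') := by
      rw [bregJF_eq_dotProduct_sub_of_bregJF_eq_zero (hpair f) rfl (by rw [hsymm, hlevel])]
      simp only [dotProduct_smul, dotProduct_add, dotProduct_neg, smul_eq_mul]
      ring
    have hA : grad Ψstar f ⬝ᵥ ((1/2 : ℝ) • (f - f'')) =
        (1/2 : ℝ) * bregJF Ψstar (grad Ψstar f) f'' := by
      rw [bregJF_eq_dotProduct_sub_of_bregJF_eq_zero (hpair f) rfl hlevel]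
      simp only [dotProduct_smul, dotProduct_sub, smul_eq_mul]
    exact ⟨⟨hS, hS ▸ by linarith [hnonneg (grad Ψstar f) (-f'')]⟩, hA,
      hA ▸ by linarith [hnonneg (grad Ψstar f) f'']⟩
end

section
/- Consider the equilibrium flow ẋ = −S ∇Ψ*_x(Sᵀ(∇Φ(x) − ∇Φ(x̃))) on ℝ_{>0}^V. Then: (i) a point x ∈ ℝ_{>0}^V is a steady state (the right-hand side vanishes at x) if and only if Sᵀ(∇Φ(x) − ∇Φ(x̃)) = 0, i.e., the steady-state set equals the equilibrium manifold M^eq(x̃); (ii) for any initial state x₀ ∈ ℝ_{>0}^V there is exactly one steady state x_eq in the stoichiometric class P^sc(x₀) := {x ∈ ℝ_{>0}^V : x − x₀ ∈ Im S}, namely the unique point x† of P^sc(x₀) ∩ M^eq(x̃), and it satisfies the variational characterizations x_eq = argmin_{x ∈ P^sc(x₀)} D[x‖x̃] and x_eq = argmin_{x_q ∈ M^eq(x̃)} D[x₀‖x_q]. -/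
open Matrix Filter Set

open Topology

/-!
At a steady state, `⟨Sᵀμ, ∇Ψ*(Sᵀμ)⟩ = ⟨μ, S ∇Ψ*(Sᵀμ)⟩ = 0`; since `Ψ*` is even and strictly
convex, `∇Ψ*(0) = 0` and `⟨f, ∇Ψ*(f)⟩ > 0` for `f ≠ 0`, so steady states are exactly the points
with `Sᵀμ = 0`.

The equilibrium point is the minimiser of the tilted potential `Φ x - ⟨x, ∇Φ(x̃)⟩` over the
stoichiometric class, whose first-order condition is `Sᵀ(∇Φ(x) - ∇Φ(x̃)) = 0`. Surjectivity of
`∇Φ` bounds the sublevel sets, so a minimising sequence has a limit point. That limit cannot lie on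
the boundary of the orthant: on the segment from it to `x₀`, `Φ` would be squeezed between two
lines through the same point, so its slopes would stay bounded below, contradicting steepness.
Uniqueness and both variational characterisations follow from the Pythagorean identity
`D[p‖r] = D[p‖q] + D[q‖r]`, valid when `p - q ∈ Im S` and `Sᵀ(∇Φ(q) - ∇Φ(r)) = 0`, together
with `D[p‖q] > 0` for `p ≠ q`.
-/

section Convex

variable {E : Type*} [NormedAddCommGroup E] [NormedSpace ℝ E] {s : Set E} {f : E → ℝ} {x y : E}

theorem ConvexOn.add_fderiv_sub_le (hf : ConvexOn ℝ s f) (hx : x ∈ s) (hy : y ∈ s)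
    (hd : DifferentiableAt ℝ f x) : f x + fderiv ℝ f x (y - x) ≤ f y := by
  have hline : HasDerivAt (f ∘ AffineMap.lineMap x y) (fderiv ℝ f x (y - x)) (0 : ℝ) := by
    simpa using hd.hasFDerivAt.comp_hasDerivAt_of_eq 0 AffineMap.hasDerivAt_lineMap (by simp)
  have hconv : ConvexOn ℝ (Icc (0 : ℝ) 1) (f ∘ AffineMap.lineMap x y) :=
    (hf.comp_affineMap _).subset (fun t ht => hf.1.lineMap_mem hx hy ht) (convex_Icc 0 1)
  have := hconv.le_slope_of_hasDerivAt (left_mem_Icc.2 zero_le_one)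
    (right_mem_Icc.2 zero_le_one) zero_lt_one hline
  simpa [slope_def_field, le_sub_iff_add_le'] using this

theorem StrictConvexOn.add_fderiv_sub_lt (hf : StrictConvexOn ℝ s f) (hx : x ∈ s) (hy : y ∈ s)
    (hxy : x ≠ y) (hd : DifferentiableAt ℝ f x) : f x + fderiv ℝ f x (y - x) < f y := by
  have hhalf : (0 : ℝ) < 1 / 2 := by norm_num
  have hmid := hf.2 hx hy hxy hhalf hhalf (by norm_num)
  have hz := hf.1 hx hy hhalf.le hhalf.le (by norm_num)
  have htan := hf.convexOn.add_fderiv_sub_le hx hz hd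
  have hzx : (1 / 2 : ℝ) • x + (1 / 2 : ℝ) • y - x = (1 / 2 : ℝ) • (y - x) := by module
  rw [hzx, map_smul, smul_eq_mul] at htan
  simp only [smul_eq_mul] at hmid
  linarith

theorem StrictConvexOn.fderiv_sub_fderiv_apply_pos (hf : StrictConvexOn ℝ s f) (hx : x ∈ s)
    (hy : y ∈ s) (hxy : x ≠ y) (hdx : DifferentiableAt ℝ f x) (hdy : DifferentiableAt ℝ f y) :
    0 < (fderiv ℝ f y - fderiv ℝ f x) (y - x) := by
  have h₁ := hf.add_fderiv_sub_lt hx hy hxy hdx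
  have h₂ := hf.add_fderiv_sub_lt hy hx hxy.symm hdy
  rw [← neg_sub, map_neg] at h₂
  simp only [_root_.sub_apply]
  linarith

theorem ConvexOn.fderiv_zero_eq_zero_of_even (hf : ConvexOn ℝ univ f) (heven : ∀ x, f (-x) = f x) :
    fderiv ℝ f 0 = 0 := by
  refine IsLocalMin.fderiv_eq_zero (Filter.Eventually.of_forall fun x => ?_)
  have := hf.2 (mem_univ x) (mem_univ (-x)) (by norm_num : (0 : ℝ) ≤ 1 / 2)
    (by norm_num : (0 : ℝ) ≤ 1 / 2) (by norm_num)
  norm_num [heven] at this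
  linarith

theorem ConvexOn.le_of_tendsto (hf : ConvexOn ℝ s f) {u : ℕ → E} {z : E} {m : ℝ}
    (hu : ∀ k, u k ∈ s) (huz : Tendsto u atTop (𝓝 z)) (hfu : Tendsto (f ∘ u) atTop (𝓝 m))
    (hx : x ∈ s) {a b : ℝ} (ha : 0 ≤ a) (hb : 0 ≤ b) (hab : a + b = 1)
    (hc : ContinuousAt f (a • x + b • z)) : f (a • x + b • z) ≤ a * f x + b * m :=
  le_of_tendsto_of_tendsto' (hc.tendsto.comp (tendsto_const_nhds.add (huz.const_smul b)))
    (tendsto_const_nhds.add (hfu.const_mul b)) fun k => hf.2 hx (hu k) ha hb hab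

end Convex

theorem ConvexOn.not_tendsto_deriv_atBot {g : ℝ → ℝ} (hg : ConvexOn ℝ (Ioc 0 1) g) {a c K : ℝ}
    (hbound : ∀ t ∈ Ioc (0 : ℝ) 1, a + c * t ≤ g t ∧ g t ≤ a + K * t) :
    ¬Tendsto (deriv g) (𝓝[>] 0) atBot := by
  intro hlim
  obtain ⟨t, hgt, ht⟩ := ((hlim.eventually_lt_atBot (min (2 * c - K) 0)).and
    (Ioc_mem_nhdsGT zero_lt_one)).exists
  have ht₂ : t / 2 ∈ Ioc (0 : ℝ) 1 := ⟨by linarith [ht.1], by linarith [ht.1, ht.2]⟩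
  have hd : HasDerivAt g (deriv g t) t :=
    (differentiableAt_of_deriv_ne_zero (hgt.trans_le (min_le_right _ _)).ne).hasDerivAt
  -- the two bounds make the slope of `g` on `[t / 2, t]` at least `2 * c - K`
  have hslope := hg.slope_le_of_hasDerivAt ht₂ ht (by linarith [ht.1]) hd
  rw [slope_def_field, div_le_iff₀ (by linarith [ht.1])] at hslope
  nlinarith [(hbound t ht).1, (hbound _ ht₂).2, hgt.trans_le (min_le_left _ _), ht.1]

theorem dotProduct_grad {n : ℕ} (F : (Fin n → ℝ) → ℝ) (x v : Fin n → ℝ) :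
    v ⬝ᵥ grad F x = fderiv ℝ F x v := by
  conv_rhs => rw [pi_eq_sum_univ' v]
  simp [grad, dotProduct]

theorem transpose_mulVec_eq_zero_iff {m n : ℕ} {S : Matrix (Fin m) (Fin n) ℝ} {μ : Fin m → ℝ} :
    Sᵀ *ᵥ μ = 0 ↔ ∀ w, (S *ᵥ w) ⬝ᵥ μ = 0 := by
  have key : ∀ w, (S *ᵥ w) ⬝ᵥ μ = (Sᵀ *ᵥ μ) ⬝ᵥ w := fun w => by
    rw [dotProduct_comm, ← dotProduct_transpose_mulVec, dotProduct_comm]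
  simp_rw [key]
  exact dotProduct_eq_zero_iff.symm

section Dissipation

variable {m : ℕ} {Ψ : (Fin m → ℝ) → ℝ}

theorem IsDissipation.grad_zero (h : IsDissipation Ψ) : grad Ψ 0 = 0 := by
  ext i
  simp [grad, h.1.convexOn.fderiv_zero_eq_zero_of_even h.2.2.2.1]

theorem IsDissipation.dotProduct_grad_pos (h : IsDissipation Ψ) {f : Fin m → ℝ} (hf : f ≠ 0) :
    0 < f ⬝ᵥ grad Ψ f := by
  have hd : Differentiable ℝ Ψ := h.2.1.differentiable one_ne_zero
  have := h.1.fderiv_sub_fderiv_apply_pos (mem_univ 0) (mem_univ f) hf.symm (hd 0) (hd f)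
  rwa [h.1.convexOn.fderiv_zero_eq_zero_of_even h.2.2.2.1, sub_zero, sub_zero,
    ← dotProduct_grad] at this

theorem IsDissipation.mulVec_grad_transpose_mulVec_eq_zero_iff (h : IsDissipation Ψ) {k : ℕ}
    (S : Matrix (Fin k) (Fin m) ℝ) (μ : Fin k → ℝ) :
    S *ᵥ grad Ψ (Sᵀ *ᵥ μ) = 0 ↔ Sᵀ *ᵥ μ = 0 := by
  refine ⟨fun hS => ?_, fun hμ => by rw [hμ, h.grad_zero, mulVec_zero]⟩
  by_contra hne
  have hdot : (Sᵀ *ᵥ μ) ⬝ᵥ grad Ψ (Sᵀ *ᵥ μ) = 0 := by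
    rw [dotProduct_comm, dotProduct_transpose_mulVec, hS, dotProduct_zero]
  exact (h.dotProduct_grad_pos hne).ne' hdot

end Dissipation

theorem breg_eq_add_of_sub_eq_mulVec {n k : ℕ} (F : (Fin n → ℝ) → ℝ)
    {S : Matrix (Fin n) (Fin k) ℝ} {p q r : Fin n → ℝ} {w : Fin k → ℝ} (hpq : p - q = S *ᵥ w)
    (hqr : Sᵀ *ᵥ (grad F q - grad F r) = 0) :
    breg F p r = breg F p q + breg F q r := by
  have h := transpose_mulVec_eq_zero_iff.1 hqr w
  rw [← hpq] at h
  simp only [breg, dotProduct_sub, sub_dotProduct] at h ⊢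
  linarith

theorem posOrth_eq_pi (n : ℕ) : posOrth n = univ.pi fun _ => Ioi 0 := by
  ext x
  simp [posOrth]

theorem isOpen_posOrth (n : ℕ) : IsOpen (posOrth n) := by
  rw [posOrth_eq_pi]
  exact isOpen_set_pi finite_univ fun _ _ => isOpen_Ioi

theorem interior_setOf_forall_nonneg (n : ℕ) :
    interior {x : Fin n → ℝ | ∀ i, 0 ≤ x i} = posOrth n := by
  have h : {x : Fin n → ℝ | ∀ i, 0 ≤ x i} = univ.pi fun _ => Ici 0 := by
    ext x
    simp [Pi.le_def]
  rw [h, interior_pi_set finite_univ, posOrth_eq_pi]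
  simp

theorem smul_add_one_sub_smul_mem_posOrth {n : ℕ} {x y : Fin n → ℝ} (hx : x ∈ posOrth n)
    (hy : ∀ i, 0 ≤ y i) {t : ℝ} (ht : t ∈ Ioc (0 : ℝ) 1) : t • x + (1 - t) • y ∈ posOrth n :=
  fun i => by
    have := mul_nonneg (sub_nonneg.2 ht.2) (hy i)
    simp only [Pi.add_apply, Pi.smul_apply, smul_eq_mul]
    nlinarith [mul_pos ht.1 (hx i)]

section Thermo

variable {n : ℕ} {Φ : (Fin n → ℝ) → ℝ}

theorem IsThermo.breg_pos (hΦ : IsThermo Φ) {p q : Fin n → ℝ} (hp : p ∈ posOrth n)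
    (hq : q ∈ posOrth n) (hpq : p ≠ q) : 0 < breg Φ p q := by
  have := hΦ.1.add_fderiv_sub_lt hq hp hpq.symm (hΦ.2.1 q hq)
  rw [breg, dotProduct_grad]
  linarith

theorem IsThermo.exists_le_sub_dotProduct (hΦ : IsThermo Φ) (c : Fin n → ℝ) :
    ∃ C, ∀ x ∈ posOrth n, C ≤ Φ x - x ⬝ᵥ c := by
  obtain ⟨y, hy, hyc⟩ := hΦ.2.2.1.surjOn (mem_univ c)
  refine ⟨Φ y - y ⬝ᵥ c, fun x hx => ?_⟩
  have := hΦ.1.convexOn.add_fderiv_sub_le hy hx (hΦ.2.1 y hy)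
  rw [← dotProduct_grad, hyc, sub_dotProduct] at this
  linarith

theorem IsThermo.isBounded_sublevel (hΦ : IsThermo Φ) (b : Fin n → ℝ) (M : ℝ) :
    Bornology.IsBounded {x | x ∈ posOrth n ∧ Φ x - x ⬝ᵥ b ≤ M} := by
  choose C hC using fun i => hΦ.exists_le_sub_dotProduct (b + Pi.single i 1)
  refine (Metric.isBounded_Icc (0 : Fin n → ℝ) fun i => M - C i).subset
    fun x ⟨hx, hxM⟩ => ⟨fun i => (hx i).le, fun i => ?_⟩
  have := hC i x hx
  rw [dotProduct_add, dotProduct_single, mul_one] at this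
  dsimp only
  linarith

theorem IsThermo.mem_posOrth_of_tendsto (hΦ : IsThermo Φ) {x₀ xs : Fin n → ℝ}
    {u : ℕ → Fin n → ℝ} {L c : ℝ} (hx₀ : x₀ ∈ posOrth n) (hxs : ∀ i, 0 ≤ xs i)
    (hu : ∀ k, u k ∈ posOrth n) (hlim : Tendsto u atTop (𝓝 xs))
    (hval : Tendsto (Φ ∘ u) atTop (𝓝 L))
    (hseg : ∀ t ∈ Ioc (0 : ℝ) 1, L + c * t ≤ Φ (t • x₀ + (1 - t) • xs)) : xs ∈ posOrth n := by
  by_contra hxs'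
  have hfr : xs ∈ frontier {x : Fin n → ℝ | ∀ i, 0 ≤ x i} := by
    have hclosed : IsClosed {x : Fin n → ℝ | ∀ i, 0 ≤ x i} :=
      isClosed_le continuous_const continuous_id
    rw [hclosed.frontier_eq, interior_setOf_forall_nonneg]
    exact ⟨hxs, hxs'⟩
  have hconv : ConvexOn ℝ (Ioc 0 1) fun t : ℝ => Φ (t • x₀ + (1 - t) • xs) := by
    have := (hΦ.1.convexOn.comp_affineMap (AffineMap.lineMap xs x₀)).subset
      (fun t ht => by
        simpa [AffineMap.lineMap_apply_module, add_comm] using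
          smul_add_one_sub_smul_mem_posOrth hx₀ hxs ht) (convex_Ioc 0 1)
    simpa [Function.comp_def, AffineMap.lineMap_apply_module, add_comm] using this
  refine hconv.not_tendsto_deriv_atBot (a := L) (c := c) (K := Φ x₀ - L)
    (fun t ht => ⟨hseg t ht, ?_⟩) (hΦ.2.2.2 x₀ hx₀ xs hfr)
  have := hΦ.1.convexOn.le_of_tendsto hu hlim hval hx₀ ht.1.le (sub_nonneg.2 ht.2) (by ring)
    (hΦ.2.1 _ (smul_add_one_sub_smul_mem_posOrth hx₀ hxs ht)).continuousAt
  linarith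

theorem IsThermo.exists_isMinOn (hΦ : IsThermo Φ) (b : Fin n → ℝ)
    (R : Submodule ℝ (Fin n → ℝ)) {x₀ : Fin n → ℝ} (hx₀ : x₀ ∈ posOrth n) :
    ∃ xs ∈ posOrth n, xs - x₀ ∈ R ∧
      IsMinOn (fun x => Φ x - x ⬝ᵥ b) {x | x ∈ posOrth n ∧ x - x₀ ∈ R} xs := by
  set G := fun x => Φ x - x ⬝ᵥ b
  set A := {x | x ∈ posOrth n ∧ x - x₀ ∈ R}
  obtain ⟨C, hC⟩ := hΦ.exists_le_sub_dotProduct b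
  have hbdd : BddBelow (G '' A) := ⟨C, by rintro _ ⟨x, hx, rfl⟩; exact hC x hx.1⟩
  obtain ⟨v, hv_anti, hv_lim, hvA⟩ :=
    exists_seq_tendsto_sInf (S := G '' A) ⟨G x₀, x₀, ⟨hx₀, by simp⟩, rfl⟩ hbdd
  choose u huA hu using hvA
  obtain ⟨xs, -, φ, hφ, hlim⟩ := tendsto_subseq_of_bounded (hΦ.isBounded_sublevel b (v 0))
    fun k => ⟨(huA k).1, (hu k).trans_le (hv_anti (Nat.zero_le k))⟩
  set m := sInf (G '' A)
  have hdot : Continuous fun x : Fin n → ℝ => x ⬝ᵥ b := by fun_prop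
  have hmin : ∀ x ∈ A, m ≤ G x := fun x hx => csInf_le hbdd ⟨x, hx, rfl⟩
  have hGu : Tendsto (G ∘ u ∘ φ) atTop (𝓝 m) := by
    simpa [Function.comp_def, hu] using hv_lim.comp hφ.tendsto_atTop
  have hxsR : xs - x₀ ∈ R := R.closed_of_finiteDimensional.mem_of_tendsto (hlim.sub_const x₀)
    (Eventually.of_forall fun k => (huA (φ k)).2)
  have hxs_nonneg : ∀ i, 0 ≤ xs i := fun i =>
    ge_of_tendsto' (((continuous_apply i).tendsto xs).comp hlim) fun k => ((huA (φ k)).1 i).le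
  have hxs : xs ∈ posOrth n := by
    refine hΦ.mem_posOrth_of_tendsto (L := m + xs ⬝ᵥ b) (c := (x₀ - xs) ⬝ᵥ b) hx₀ hxs_nonneg
      (fun k => (huA (φ k)).1) hlim ?_ fun t ht => ?_
    · have := hGu.add ((hdot.tendsto xs).comp hlim)
      simpa [G, Function.comp_def] using this
    · have hsub : t • x₀ + (1 - t) • xs - x₀ = (1 - t) • (xs - x₀) := by module
      have := hmin _ ⟨smul_add_one_sub_smul_mem_posOrth hx₀ hxs_nonneg ht,
        hsub ▸ R.smul_mem _ hxsR⟩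
      simp only [G, add_dotProduct, smul_dotProduct, sub_dotProduct, smul_eq_mul] at this ⊢
      linarith
  have hGxs : G xs = m := tendsto_nhds_unique
    (((hΦ.2.1 xs hxs).continuousAt.sub hdot.continuousAt).tendsto.comp hlim) hGu
  exact ⟨xs, hxs, hxsR, fun x hx => hGxs ▸ hmin x hx⟩

theorem IsThermo.dotProduct_grad_sub_eq_zero_of_isMinOn (hΦ : IsThermo Φ) {b x₀ xs : Fin n → ℝ}
    {R : Submodule ℝ (Fin n → ℝ)} (hxs : xs ∈ posOrth n) (hxsR : xs - x₀ ∈ R)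
    (hmin : IsMinOn (fun x => Φ x - x ⬝ᵥ b) {x | x ∈ posOrth n ∧ x - x₀ ∈ R} xs)
    {d : Fin n → ℝ} (hd : d ∈ R) : d ⬝ᵥ (grad Φ xs - b) = 0 := by
  have hline : HasDerivAt (fun t : ℝ => xs + t • d) d 0 := by
    simpa using ((hasDerivAt_id (0 : ℝ)).smul_const d).const_add xs
  have hderiv : HasDerivAt (fun t : ℝ => Φ (xs + t • d) - (xs + t • d) ⬝ᵥ b)
      (fderiv ℝ Φ xs d - d ⬝ᵥ b) 0 := by
    refine ((hΦ.2.1 xs hxs).hasFDerivAt.comp_hasDerivAt_of_eq 0 hline (by simp)).sub ?_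
    simpa [add_dotProduct, smul_dotProduct] using
      ((hasDerivAt_id (0 : ℝ)).mul_const (d ⬝ᵥ b)).const_add (xs ⬝ᵥ b)
  have hloc : IsLocalMin (fun t : ℝ => Φ (xs + t • d) - (xs + t • d) ⬝ᵥ b) 0 := by
    have hmem : ∀ᶠ t in 𝓝 (0 : ℝ), xs + t • d ∈ posOrth n :=
      hline.continuousAt.eventually_mem ((isOpen_posOrth n).mem_nhds (by simpa using hxs))
    filter_upwards [hmem] with t ht
    simpa using hmin ⟨ht, by simpa [add_sub_right_comm] using R.add_mem hxsR (R.smul_mem t hd)⟩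
  rw [dotProduct_sub, dotProduct_grad]
  exact hloc.hasDerivAt_eq_zero hderiv

theorem IsThermo.exists_transpose_mulVec_grad_sub_eq_zero (hΦ : IsThermo Φ) {k : ℕ}
    (S : Matrix (Fin n) (Fin k) ℝ) (b : Fin n → ℝ) {x₀ : Fin n → ℝ} (hx₀ : x₀ ∈ posOrth n) :
    ∃ x ∈ posOrth n, (∃ w, x - x₀ = S *ᵥ w) ∧ Sᵀ *ᵥ (grad Φ x - b) = 0 := by
  obtain ⟨x, hx, hxR, hmin⟩ := hΦ.exists_isMinOn b (LinearMap.range S.mulVecLin) hx₀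
  refine ⟨x, hx, ?_, transpose_mulVec_eq_zero_iff.2 fun w =>
    hΦ.dotProduct_grad_sub_eq_zero_of_isMinOn hx hxR hmin ⟨w, rfl⟩⟩
  obtain ⟨w, hw⟩ := hxR
  exact ⟨w, hw.symm⟩

end Thermo

theorem equilibrium_flow_steady_state_characterization_general {V E : ℕ}
    (S : Matrix (Fin V) (Fin E) ℝ)
    (Φ : (Fin V → ℝ) → ℝ) (hΦ : IsThermo Φ)
    (Ψstar : (Fin V → ℝ) → (Fin E → ℝ) → ℝ)
    (hdiss : ∀ x ∈ posOrth V, IsDissipation (Ψstar x))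
    (xtil : Fin V → ℝ) :
    (∀ x ∈ posOrth V,
      (S *ᵥ grad (Ψstar x) (Sᵀ *ᵥ (grad Φ x - grad Φ xtil)) = 0 ↔
        Sᵀ *ᵥ (grad Φ x - grad Φ xtil) = 0)) ∧
    (∀ x₀ ∈ posOrth V, ∃ xeq : Fin V → ℝ,
      (xeq ∈ posOrth V ∧ (∃ w, xeq - x₀ = S *ᵥ w) ∧
        Sᵀ *ᵥ (grad Φ xeq - grad Φ xtil) = 0) ∧
      (∀ x : Fin V → ℝ,
        (x ∈ posOrth V ∧ (∃ w, x - x₀ = S *ᵥ w) ∧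
          Sᵀ *ᵥ (grad Φ x - grad Φ xtil) = 0) → x = xeq) ∧
      (∀ x ∈ posOrth V, (∃ w, x - x₀ = S *ᵥ w) → x ≠ xeq →
        breg Φ xeq xtil < breg Φ x xtil) ∧
      (∀ xq ∈ posOrth V, Sᵀ *ᵥ (grad Φ xq - grad Φ xtil) = 0 → xq ≠ xeq →
        breg Φ x₀ xeq < breg Φ x₀ xq)) := by
  refine ⟨fun x hx => (hdiss x hx).mulVec_grad_transpose_mulVec_eq_zero_iff S _, fun x₀ hx₀ => ?_⟩
  obtain ⟨xeq, hxeq, ⟨w₀, hw₀⟩, hxeqM⟩ :=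
    hΦ.exists_transpose_mulVec_grad_sub_eq_zero S (grad Φ xtil) hx₀
  have hpyth : ∀ x w, x - x₀ = S *ᵥ w → breg Φ x xtil = breg Φ x xeq + breg Φ xeq xtil :=
    fun x w hw => breg_eq_add_of_sub_eq_mulVec Φ (w := w - w₀)
      (by rw [mulVec_sub, ← hw, ← hw₀]; abel) hxeqM
  refine ⟨xeq, ⟨hxeq, ⟨w₀, hw₀⟩, hxeqM⟩, ?_, ?_, ?_⟩
  · rintro x ⟨hx, ⟨w, hw⟩, hxM⟩
    by_contra hne
    have := breg_eq_add_of_sub_eq_mulVec Φ (p := xeq) (q := x) (r := xtil) (w := w₀ - w)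
      (by rw [mulVec_sub, ← hw, ← hw₀]; abel) hxM
    linarith [hpyth x w hw, hΦ.breg_pos hx hxeq hne, hΦ.breg_pos hxeq hx (Ne.symm hne)]
  · rintro x hx ⟨w, hw⟩ hne
    linarith [hpyth x w hw, hΦ.breg_pos hx hxeq hne]
  · intro xq hxq hxqM hne
    have := breg_eq_add_of_sub_eq_mulVec Φ (p := x₀) (q := xeq) (r := xq) (w := -w₀)
      (by rw [mulVec_neg, ← hw₀]; abel)
      (by rw [← sub_sub_sub_cancel_right _ _ (grad Φ xtil), mulVec_sub, hxeqM, hxqM, sub_zero])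
    linarith [hΦ.breg_pos hxeq hxq (Ne.symm hne)]

/-- Steady states of the equilibrium flow: (i) x is steady iff x ∈ M^eq(x̃);
(ii) in each stoichiometric class there is exactly one steady state, the unique point of
P^sc(x₀) ∩ M^eq(x̃), which is the unique minimizer of D[·‖x̃] over P^sc(x₀) and of D[x₀‖·]
over M^eq(x̃). -/
theorem equilibrium_flow_steady_state_characterization {V E : ℕ}
    (S : Matrix (Fin V) (Fin E) ℝ)
    (Φ : (Fin V → ℝ) → ℝ) (hΦ : IsThermo Φ)
    (Ψstar : (Fin V → ℝ) → (Fin E → ℝ) → ℝ)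
    (hdiss : ∀ x ∈ posOrth V, IsDissipation (Ψstar x))
    (xtil : Fin V → ℝ) (hxtil : xtil ∈ posOrth V) :
    (∀ x ∈ posOrth V,
      (S *ᵥ grad (Ψstar x) (Sᵀ *ᵥ (grad Φ x - grad Φ xtil)) = 0 ↔
        Sᵀ *ᵥ (grad Φ x - grad Φ xtil) = 0)) ∧
    (∀ x₀ ∈ posOrth V, ∃ xeq : Fin V → ℝ,
      (xeq ∈ posOrth V ∧ (∃ w, xeq - x₀ = S *ᵥ w) ∧
        Sᵀ *ᵥ (grad Φ xeq - grad Φ xtil) = 0) ∧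
      (∀ x : Fin V → ℝ,
        (x ∈ posOrth V ∧ (∃ w, x - x₀ = S *ᵥ w) ∧
          Sᵀ *ᵥ (grad Φ x - grad Φ xtil) = 0) → x = xeq) ∧
      (∀ x ∈ posOrth V, (∃ w, x - x₀ = S *ᵥ w) → x ≠ xeq →
        breg Φ xeq xtil < breg Φ x xtil) ∧
      (∀ xq ∈ posOrth V, Sᵀ *ᵥ (grad Φ xq - grad Φ xtil) = 0 → xq ≠ xeq →
        breg Φ x₀ xeq < breg Φ x₀ xq)) :=
  equilibrium_flow_steady_state_characterization_general S Φ hΦ Ψstar hdiss xtil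
end

section
/- Complex balancing implies pseudo-Hilbert-isosceles orthogonality for mass-action kinetics: consider a reversible chemical reaction network with mass-action kinetics with data Γ, B⁺, B⁻, B = B⁺ − B⁻, S = ΓB, and k± ∈ ℝ_{>0}^r. Suppose x̃ ∈ ℝ_{>0}^n is a complex-balanced state, i.e., B(j⁺(x̃) − j⁻(x̃)) = 0. Define, for x ∈ ℝ_{>0}^n, f_S(x) := Sᵀ(ln x − ln x̃) and f_A := ln(k⁺/k⁻) + Sᵀ ln x̃ (componentwise logarithms). Then for all x ∈ ℝ_{>0}^n, Ψ*_x(f_S(x) + f_A) = Ψ*_x(f_S(x) − f_A), where Ψ*_x(f) := 2 Σ_e ω_e(x)(cosh(f_e/2) − 1) and ω(x) := 2√(j⁺(x) ∘ j⁻(x)). -/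
open Matrix

/-- One-way mass-action flux: j_e(x) = k_e ∏ᵢ xᵢ^{(ΓB)_{ie}}. -/
noncomputable def oneWayFlux {n m r : ℕ} (Γ : Matrix (Fin n) (Fin m) ℕ)
    (B : Matrix (Fin m) (Fin r) ℕ) (k : Fin r → ℝ) (x : Fin n → ℝ) : Fin r → ℝ :=
  fun e => k e * ∏ i, x i ^ ((Γ * B) i e)

/-- The cosh-type dissipation function Ψ*_x(f) = 2 Σ_e ω_e(x)(cosh(f_e/2) − 1) with
frenetic activity ω(x) = 2√(j⁺(x) ∘ j⁻(x)). -/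
noncomputable def coshDissipation {n m r : ℕ} (Γ : Matrix (Fin n) (Fin m) ℕ)
    (Bp Bm : Matrix (Fin m) (Fin r) ℕ) (kp km : Fin r → ℝ)
    (x : Fin n → ℝ) (f : Fin r → ℝ) : ℝ :=
  2 * ∑ e, (2 * Real.sqrt (oneWayFlux Γ Bp kp x e * oneWayFlux Γ Bm km x e)) *
      (Real.cosh (f e / 2) - 1)


/-- Weighted sum of a complex column of Γ against a vector. -/
noncomputable def Lsum {n m : ℕ} (Γ : Matrix (Fin n) (Fin m) ℕ)
    (v : Fin n → ℝ) (l : Fin m) : ℝ := ∑ i, (Γ i l : ℝ) * v i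

lemma sqrt_exp_mul_exp (a b : ℝ) :
    Real.sqrt (Real.exp a * Real.exp b) = Real.exp ((a + b) / 2) := by
  have h : Real.exp (a + b) = Real.exp ((a + b) / 2) * Real.exp ((a + b) / 2) := by
    rw [← Real.exp_add]; congr 1; ring
  rw [← Real.exp_add, h, Real.sqrt_mul_self (Real.exp_nonneg _)]

lemma cosh_edge_key (a b c d : ℝ) :
    (2 * Real.sqrt (Real.exp (a + c) * Real.exp (b + d))) *
        (Real.cosh (((a - b) + (c - d)) / 2) - 1)
      - (2 * Real.sqrt (Real.exp (a + c) * Real.exp (b + d))) *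
        (Real.cosh (((a - b) - (c - d)) / 2) - 1)
    = (Real.exp a - Real.exp b) * (Real.exp c - Real.exp d) := by
  rw [sqrt_exp_mul_exp, Real.cosh_eq, Real.cosh_eq]
  have h1 : Real.exp ((a + c + (b + d)) / 2) * Real.exp (((a - b) + (c - d)) / 2)
      = Real.exp a * Real.exp c := by
    rw [← Real.exp_add, ← Real.exp_add]; congr 1; ring
  have h2 : Real.exp ((a + c + (b + d)) / 2) * Real.exp (-(((a - b) + (c - d)) / 2))
      = Real.exp b * Real.exp d := by
    rw [← Real.exp_add, ← Real.exp_add]; congr 1; ring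
  have h3 : Real.exp ((a + c + (b + d)) / 2) * Real.exp (((a - b) - (c - d)) / 2)
      = Real.exp a * Real.exp d := by
    rw [← Real.exp_add, ← Real.exp_add]; congr 1; ring
  have h4 : Real.exp ((a + c + (b + d)) / 2) * Real.exp (-(((a - b) - (c - d)) / 2))
      = Real.exp b * Real.exp c := by
    rw [← Real.exp_add, ← Real.exp_add]; congr 1; ring
  linear_combination h1 + h2 - h3 - h4

lemma oneWayFlux_exp {n m r : ℕ} (Γ : Matrix (Fin n) (Fin m) ℕ)
    (B : Matrix (Fin m) (Fin r) ℕ) (k : Fin r → ℝ) (x : Fin n → ℝ)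
    (hk : ∀ e, 0 < k e) (hx : ∀ i, 0 < x i) (e : Fin r) (l : Fin m)
    (hl : ∀ l', B l' e = if l' = l then 1 else 0) :
    oneWayFlux Γ B k x e = Real.exp (Real.log (k e) + Lsum Γ (fun i => Real.log (x i)) l) := by
  have hGB : ∀ i, (Γ * B) i e = Γ i l := by
    intro i
    rw [Matrix.mul_apply, Finset.sum_congr rfl (fun l' _ => by rw [hl l'])]
    simp [mul_ite, Finset.sum_ite_eq']
  unfold oneWayFlux Lsum
  rw [Real.exp_add, Real.exp_log (hk e)]
  congr 1
  rw [Real.exp_sum]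
  refine Finset.prod_congr rfl fun i _ => ?_
  rw [hGB i, Real.exp_nat_mul, Real.exp_log (hx i)]

/-- For mass-action kinetics, complex balancing of x̃ implies the
pseudo-Hilbert-isosceles orthogonality Ψ*_x(f_S(x) + f_A) = Ψ*_x(f_S(x) − f_A)
for all positive x, where f_S(x) = Sᵀ(ln x − ln x̃) and f_A = ln(k⁺/k⁻) + Sᵀ ln x̃. -/
theorem complex_balance_implies_pseudo_hilbert_orthogonality
    {n m r : ℕ}
    (Γ : Matrix (Fin n) (Fin m) ℕ)
    (Bp Bm : Matrix (Fin m) (Fin r) ℕ)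
    (hBp01 : ∀ l e, Bp l e = 0 ∨ Bp l e = 1)
    (hBm01 : ∀ l e, Bm l e = 0 ∨ Bm l e = 1)
    (hBpcol : ∀ e, ∃! l, Bp l e = 1)
    (hBmcol : ∀ e, ∃! l, Bm l e = 1)
    (kp km : Fin r → ℝ) (hkp : ∀ e, 0 < kp e) (hkm : ∀ e, 0 < km e)
    (xt : Fin n → ℝ) (hxt : ∀ i, 0 < xt i)
    (hCB : (Bp.map (Nat.cast : ℕ → ℝ) - Bm.map (Nat.cast : ℕ → ℝ)) *ᵥ
        (oneWayFlux Γ Bp kp xt - oneWayFlux Γ Bm km xt) = 0) :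
    ∀ x : Fin n → ℝ, (∀ i, 0 < x i) →
      coshDissipation Γ Bp Bm kp km x
        ((((Γ * Bp).map (Nat.cast : ℕ → ℝ) - (Γ * Bm).map (Nat.cast : ℕ → ℝ))ᵀ *ᵥ
            (fun i => Real.log (x i) - Real.log (xt i))) +
          ((fun e => Real.log (kp e / km e)) +
            (((Γ * Bp).map (Nat.cast : ℕ → ℝ) - (Γ * Bm).map (Nat.cast : ℕ → ℝ))ᵀ *ᵥ
              fun i => Real.log (xt i)))) =
      coshDissipation Γ Bp Bm kp km x
        ((((Γ * Bp).map (Nat.cast : ℕ → ℝ) - (Γ * Bm).map (Nat.cast : ℕ → ℝ))ᵀ *ᵥ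
            (fun i => Real.log (x i) - Real.log (xt i))) -
          ((fun e => Real.log (kp e / km e)) +
            (((Γ * Bp).map (Nat.cast : ℕ → ℝ) - (Γ * Bm).map (Nat.cast : ℕ → ℝ))ᵀ *ᵥ
              fun i => Real.log (xt i)))) := by
  classical
  intro x hx
  choose hd hhd hud using hBpcol
  choose tl htl hut using hBmcol
  have hindp : ∀ e l, Bp l e = if l = hd e then 1 else 0 := by
    intro e l
    by_cases hle : l = hd e
    · rw [if_pos hle, hle]; exact hhd e
    · rw [if_neg hle]
      rcases hBp01 l e with h0 | h1
      · exact h0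
      · exact absurd (hud e l h1) hle
  have hindm : ∀ e l, Bm l e = if l = tl e then 1 else 0 := by
    intro e l
    by_cases hle : l = tl e
    · rw [if_pos hle, hle]; exact htl e
    · rw [if_neg hle]
      rcases hBm01 l e with h0 | h1
      · exact h0
      · exact absurd (hut e l h1) hle
  have hST : ∀ (v : Fin n → ℝ) (e : Fin r),
      ((((Γ * Bp).map (Nat.cast : ℕ → ℝ) - (Γ * Bm).map (Nat.cast : ℕ → ℝ))ᵀ) *ᵥ v) e
        = Lsum Γ v (hd e) - Lsum Γ v (tl e) := by
    intro v e
    have hp : ∀ i, (Γ * Bp) i e = Γ i (hd e) := by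
      intro i
      rw [Matrix.mul_apply, Finset.sum_congr rfl (fun l' _ => by rw [hindp e l'])]
      simp [mul_ite, Finset.sum_ite_eq']
    have hm : ∀ i, (Γ * Bm) i e = Γ i (tl e) := by
      intro i
      rw [Matrix.mul_apply, Finset.sum_congr rfl (fun l' _ => by rw [hindm e l'])]
      simp [mul_ite, Finset.sum_ite_eq']
    simp only [Matrix.mulVec, dotProduct, Matrix.transpose_apply, Matrix.sub_apply,
      Matrix.map_apply, sub_mul, Finset.sum_sub_distrib, Lsum]
    congr 1
    · exact Finset.sum_congr rfl fun i _ => by rw [hp i]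
    · exact Finset.sum_congr rfl fun i _ => by rw [hm i]
  have hsplit : ∀ l, Lsum Γ (fun i => Real.log (x i)) l
      = Lsum Γ (fun i => Real.log (x i) - Real.log (xt i)) l
        + Lsum Γ (fun i => Real.log (xt i)) l := by
    intro l
    simp only [Lsum, ← Finset.sum_add_distrib]
    exact Finset.sum_congr rfl fun i _ => by ring
  have hjp : ∀ e, oneWayFlux Γ Bp kp x e
      = Real.exp (Lsum Γ (fun i => Real.log (x i) - Real.log (xt i)) (hd e)
          + (Real.log (kp e) + Lsum Γ (fun i => Real.log (xt i)) (hd e))) := by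
    intro e
    rw [oneWayFlux_exp Γ Bp kp x hkp hx e (hd e) (hindp e)]
    congr 1
    rw [hsplit]; ring
  have hjm : ∀ e, oneWayFlux Γ Bm km x e
      = Real.exp (Lsum Γ (fun i => Real.log (x i) - Real.log (xt i)) (tl e)
          + (Real.log (km e) + Lsum Γ (fun i => Real.log (xt i)) (tl e))) := by
    intro e
    rw [oneWayFlux_exp Γ Bm km x hkm hx e (tl e) (hindm e)]
    congr 1
    rw [hsplit]; ring
  have hjpt : ∀ e, oneWayFlux Γ Bp kp xt e
      = Real.exp (Real.log (kp e) + Lsum Γ (fun i => Real.log (xt i)) (hd e)) :=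
    fun e => oneWayFlux_exp Γ Bp kp xt hkp hxt e (hd e) (hindp e)
  have hjmt : ∀ e, oneWayFlux Γ Bm km xt e
      = Real.exp (Real.log (km e) + Lsum Γ (fun i => Real.log (xt i)) (tl e)) :=
    fun e => oneWayFlux_exp Γ Bm km xt hkm hxt e (tl e) (hindm e)
  rw [← sub_eq_zero]
  simp only [coshDissipation]
  rw [← mul_sub, ← Finset.sum_sub_distrib]
  have hterm : ∀ e : Fin r,
      (2 * Real.sqrt (oneWayFlux Γ Bp kp x e * oneWayFlux Γ Bm km x e)) *
        (Real.cosh ((((((Γ * Bp).map (Nat.cast : ℕ → ℝ) - (Γ * Bm).map (Nat.cast : ℕ → ℝ))ᵀ *ᵥ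
            (fun i => Real.log (x i) - Real.log (xt i))) +
          ((fun e => Real.log (kp e / km e)) +
            (((Γ * Bp).map (Nat.cast : ℕ → ℝ) - (Γ * Bm).map (Nat.cast : ℕ → ℝ))ᵀ *ᵥ
              fun i => Real.log (xt i)))) e) / 2) - 1)
      - (2 * Real.sqrt (oneWayFlux Γ Bp kp x e * oneWayFlux Γ Bm km x e)) *
        (Real.cosh ((((((Γ * Bp).map (Nat.cast : ℕ → ℝ) - (Γ * Bm).map (Nat.cast : ℕ → ℝ))ᵀ *ᵥ
            (fun i => Real.log (x i) - Real.log (xt i))) -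
          ((fun e => Real.log (kp e / km e)) +
            (((Γ * Bp).map (Nat.cast : ℕ → ℝ) - (Γ * Bm).map (Nat.cast : ℕ → ℝ))ᵀ *ᵥ
              fun i => Real.log (xt i)))) e) / 2) - 1)
      = (Real.exp (Lsum Γ (fun i => Real.log (x i) - Real.log (xt i)) (hd e))
          - Real.exp (Lsum Γ (fun i => Real.log (x i) - Real.log (xt i)) (tl e))) *
        ((oneWayFlux Γ Bp kp xt - oneWayFlux Γ Bm km xt) e) := by
    intro e
    have f1e : ((((Γ * Bp).map (Nat.cast : ℕ → ℝ) - (Γ * Bm).map (Nat.cast : ℕ → ℝ))ᵀ *ᵥ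
            (fun i => Real.log (x i) - Real.log (xt i))) +
          ((fun e => Real.log (kp e / km e)) +
            (((Γ * Bp).map (Nat.cast : ℕ → ℝ) - (Γ * Bm).map (Nat.cast : ℕ → ℝ))ᵀ *ᵥ
              fun i => Real.log (xt i)))) e
        = ((Lsum Γ (fun i => Real.log (x i) - Real.log (xt i)) (hd e)
            - Lsum Γ (fun i => Real.log (x i) - Real.log (xt i)) (tl e))
          + ((Real.log (kp e) + Lsum Γ (fun i => Real.log (xt i)) (hd e))
            - (Real.log (km e) + Lsum Γ (fun i => Real.log (xt i)) (tl e)))) := by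
      simp only [Pi.add_apply]
      rw [hST, hST, Real.log_div (hkp e).ne' (hkm e).ne']
      ring
    have f2e : ((((Γ * Bp).map (Nat.cast : ℕ → ℝ) - (Γ * Bm).map (Nat.cast : ℕ → ℝ))ᵀ *ᵥ
            (fun i => Real.log (x i) - Real.log (xt i))) -
          ((fun e => Real.log (kp e / km e)) +
            (((Γ * Bp).map (Nat.cast : ℕ → ℝ) - (Γ * Bm).map (Nat.cast : ℕ → ℝ))ᵀ *ᵥ
              fun i => Real.log (xt i)))) e
        = ((Lsum Γ (fun i => Real.log (x i) - Real.log (xt i)) (hd e)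
            - Lsum Γ (fun i => Real.log (x i) - Real.log (xt i)) (tl e))
          - ((Real.log (kp e) + Lsum Γ (fun i => Real.log (xt i)) (hd e))
            - (Real.log (km e) + Lsum Γ (fun i => Real.log (xt i)) (tl e)))) := by
      simp only [Pi.sub_apply, Pi.add_apply]
      rw [hST, hST, Real.log_div (hkp e).ne' (hkm e).ne']
      ring
    rw [f1e, f2e, hjp e, hjm e, Pi.sub_apply, hjpt e, hjmt e]
    exact cosh_edge_key _ _ _ _
  rw [Finset.sum_congr rfl (fun e _ => hterm e)]
  have hw : ∀ e : Fin r,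
      (Real.exp (Lsum Γ (fun i => Real.log (x i) - Real.log (xt i)) (hd e))
        - Real.exp (Lsum Γ (fun i => Real.log (x i) - Real.log (xt i)) (tl e)))
      = ∑ l, ((Bp l e : ℝ) - (Bm l e : ℝ)) *
          Real.exp (Lsum Γ (fun i => Real.log (x i) - Real.log (xt i)) l) := by
    intro e
    rw [Finset.sum_congr rfl (fun l _ => by rw [hindp e l, hindm e l])]
    push_cast
    simp [sub_mul, Finset.sum_sub_distrib, ite_mul, Finset.sum_ite_eq']
  have hz : ∀ l : Fin m,
      (∑ e, ((Bp l e : ℝ) - (Bm l e : ℝ)) *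
        (oneWayFlux Γ Bp kp xt - oneWayFlux Γ Bm km xt) e) = 0 := by
    intro l
    have h := congrFun hCB l
    simpa [Matrix.mulVec, dotProduct, Matrix.sub_apply, Matrix.map_apply] using h
  have hsum : (∑ e, (Real.exp (Lsum Γ (fun i => Real.log (x i) - Real.log (xt i)) (hd e))
        - Real.exp (Lsum Γ (fun i => Real.log (x i) - Real.log (xt i)) (tl e))) *
        (oneWayFlux Γ Bp kp xt - oneWayFlux Γ Bm km xt) e) = 0 := by
    calc (∑ e, (Real.exp (Lsum Γ (fun i => Real.log (x i) - Real.log (xt i)) (hd e))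
          - Real.exp (Lsum Γ (fun i => Real.log (x i) - Real.log (xt i)) (tl e))) *
          (oneWayFlux Γ Bp kp xt - oneWayFlux Γ Bm km xt) e)
        = ∑ e, ∑ l, (((Bp l e : ℝ) - (Bm l e : ℝ)) *
            (oneWayFlux Γ Bp kp xt - oneWayFlux Γ Bm km xt) e) *
            Real.exp (Lsum Γ (fun i => Real.log (x i) - Real.log (xt i)) l) := by
          refine Finset.sum_congr rfl fun e _ => ?_
          rw [hw e, Finset.sum_mul]
          exact Finset.sum_congr rfl fun l _ => by ring
      _ = ∑ l, (∑ e, ((Bp l e : ℝ) - (Bm l e : ℝ)) *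
            (oneWayFlux Γ Bp kp xt - oneWayFlux Γ Bm km xt) e) *
            Real.exp (Lsum Γ (fun i => Real.log (x i) - Real.log (xt i)) l) := by
          rw [Finset.sum_comm]
          exact Finset.sum_congr rfl fun l _ => by rw [Finset.sum_mul]
      _ = 0 := by
          refine Finset.sum_eq_zero fun l _ => ?_
          rw [hz l, zero_mul]
  rw [hsum, mul_zero]
end

section
/- For a reversible chemical reaction network with mass-action kinetics, if x̃ ∈ ℝ_{>0}^n is a complex-balanced state, i.e., B(j⁺(x̃) − j⁻(x̃)) = 0, then the set of all positive complex-balanced states coincides with the equilibrium manifold through x̃: {x ∈ ℝ_{>0}^n : B(j⁺(x) − j⁻(x)) = 0} = {x ∈ ℝ_{>0}^n : Sᵀ(ln x − ln x̃) = 0}. -/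
/-!
Put `cₗ = ∏ᵢ (xᵢ / x̃ᵢ) ^ Γᵢₗ`, so that `j⁺(x)ₑ = j⁺(x̃)ₑ · c_{head e}`,
`j⁻(x)ₑ = j⁻(x̃)ₑ · c_{tail e}` and `Sᵀ (ln x - ln x̃) = Bᵀ ln c`. Thus `x` is on the equilibrium
manifold iff `c` is constant along every edge, and then `B (j⁺(x) - j⁻(x))` is
`c ⊙ B (j⁺(x̃) - j⁻(x̃))`, which vanishes.
Conversely, write `F, G > 0` for the fluxes at `x̃` and `a, b` for `c` at the head and tail of an
edge. Pairing `B (j⁺(x) - j⁻(x)) = 0` with `ln c` and `B (F - G) = 0` with `c` gives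
`∑ₑ (ln a - ln b)(F a - G b) = 0 = ∑ₑ (a - b)(F - G)`, while `ln t ≤ t - 1` shows that each term on
the left dominates the one on the right, strictly unless `a = b`.
-/

open Matrix

open Finset Real

section Elementary

variable {a b F G : ℝ}

lemma sub_le_mul_log_sub_log (ha : 0 < a) (hb : 0 < b) : a - b ≤ a * (log a - log b) := by
  have h := log_le_sub_one_of_pos (div_pos hb ha)
  rw [log_div hb.ne' ha.ne', le_sub_iff_add_le, le_div_iff₀ ha] at h
  linarith

lemma sub_lt_mul_log_sub_log (ha : 0 < a) (hb : 0 < b) (hab : a ≠ b) :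
    a - b < a * (log a - log b) := by
  have h := log_lt_sub_one_of_pos (div_pos hb ha) (by rwa [Ne, div_eq_one_iff_eq ha.ne', eq_comm])
  rw [log_div hb.ne' ha.ne', lt_sub_iff_add_lt, lt_div_iff₀ ha] at h
  linarith

lemma sub_mul_sub_le_mul_log_sub_log (hF : 0 < F) (hG : 0 < G) (ha : 0 < a) (hb : 0 < b) :
    (a - b) * (F - G) ≤ (log a - log b) * (F * a - G * b) := by
  nlinarith [mul_le_mul_of_nonneg_left (sub_le_mul_log_sub_log ha hb) hF.le,
    mul_le_mul_of_nonneg_left (sub_le_mul_log_sub_log hb ha) hG.le]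

lemma eq_of_mul_log_sub_log_le_sub_mul_sub (hF : 0 < F) (hG : 0 < G) (ha : 0 < a) (hb : 0 < b)
    (h : (log a - log b) * (F * a - G * b) ≤ (a - b) * (F - G)) : a = b := by
  by_contra hab
  nlinarith [mul_lt_mul_of_pos_left (sub_lt_mul_log_sub_log ha hb hab) hF,
    mul_le_mul_of_nonneg_left (sub_le_mul_log_sub_log hb ha) hG.le]

end Elementary

lemma Matrix.exists_eq_submatrix_one {V E R : Type*} [DecidableEq V] [Zero R] [One R]
    {B : Matrix V E R} (h01 : ∀ l e, B l e = 0 ∨ B l e = 1) (hcol : ∀ e, ∃! l, B l e = 1) :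
    ∃ f : E → V, B = (1 : Matrix V V R).submatrix id f := by
  choose f hf hf_unique using hcol
  refine ⟨f, Matrix.ext fun l e => ?_⟩
  rw [submatrix_apply, id, one_apply]
  split_ifs with h
  · exact h ▸ hf e
  · exact (h01 l e).resolve_right fun h1 => h (hf_unique e l h1)

lemma Matrix.mul_submatrix_one_id {ι V E R : Type*} [Fintype V] [DecidableEq V]
    [NonAssocSemiring R] (M : Matrix ι V R) (f : E → V) :
    M * (1 : Matrix V V R).submatrix id f = M.submatrix id f := by
  ext i e
  simp [mul_apply, one_apply]

section Incidence

variable {V E : Type*} (R : Type*) [DecidableEq V] [CommRing R] (hd tl : E → V)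

def incidenceMatrix : Matrix V E R :=
  (1 : Matrix V V R).submatrix id hd - (1 : Matrix V V R).submatrix id tl

variable {R hd tl}

lemma vecMul_incidenceMatrix [Fintype V] (g : V → R) :
    g ᵥ* incidenceMatrix R hd tl = fun e => g (hd e) - g (tl e) := by
  ext e
  simp [incidenceMatrix, vecMul, dotProduct, one_apply, mul_sub, sum_sub_distrib]

lemma vecMul_incidenceMatrix_eq_zero_iff [Fintype V] {g : V → R} :
    g ᵥ* incidenceMatrix R hd tl = 0 ↔ ∀ e, g (hd e) = g (tl e) := by
  simp [vecMul_incidenceMatrix, funext_iff, sub_eq_zero]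

lemma incidenceMatrix_mulVec_comp_mul [Fintype E] {c : V → R} (hc : ∀ e, c (hd e) = c (tl e))
    (w : E → R) :
    incidenceMatrix R hd tl *ᵥ (fun e => c (hd e) * w e) = c * (incidenceMatrix R hd tl *ᵥ w) := by
  ext l
  simp only [incidenceMatrix, mulVec, dotProduct, Pi.mul_apply, mul_sum]
  refine sum_congr rfl fun e _ => ?_
  by_cases h : l = hd e <;> by_cases h' : l = tl e <;> simp [one_apply, h, h', hc] <;> ring

lemma dotProduct_incidenceMatrix_mulVec [Fintype V] [Fintype E] (g : V → R) (w : E → R) :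
    g ⬝ᵥ (incidenceMatrix R hd tl *ᵥ w) = ∑ e, (g (hd e) - g (tl e)) * w e := by
  rw [dotProduct_mulVec, vecMul_incidenceMatrix]
  rfl

lemma map_natCast_submatrix_one_sub :
    ((1 : Matrix V V ℕ).submatrix id hd).map (Nat.cast : ℕ → R) -
      ((1 : Matrix V V ℕ).submatrix id tl).map Nat.cast = incidenceMatrix R hd tl := by
  rw [incidenceMatrix, ← submatrix_map, ← submatrix_map,
    Matrix.map_one _ Nat.cast_zero Nat.cast_one]

lemma log_vecMul_incidenceMatrix_eq_zero_iff [Fintype V] {c : V → ℝ} (hc : ∀ v, 0 < c v) :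
    (fun v => log (c v)) ᵥ* incidenceMatrix ℝ hd tl = 0 ↔ ∀ e, c (hd e) = c (tl e) := by
  simp only [vecMul_incidenceMatrix_eq_zero_iff, log_injOn_pos.eq_iff (hc _) (hc _)]

theorem incidenceMatrix_mulVec_eq_zero_iff [Fintype V] [Fintype E] {F G : E → ℝ}
    (hF : ∀ e, 0 < F e) (hG : ∀ e, 0 < G e)
    (hFG : incidenceMatrix ℝ hd tl *ᵥ (F - G) = 0) {c : V → ℝ} (hc : ∀ v, 0 < c v) :
    incidenceMatrix ℝ hd tl *ᵥ (fun e => F e * c (hd e) - G e * c (tl e)) = 0 ↔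
      ∀ e, c (hd e) = c (tl e) := by
  constructor
  · intro h
    have hlog := dotProduct_incidenceMatrix_mulVec (hd := hd) (tl := tl) (fun v => log (c v))
      fun e => F e * c (hd e) - G e * c (tl e)
    have hlin := dotProduct_incidenceMatrix_mulVec (hd := hd) (tl := tl) c (F - G)
    rw [h, dotProduct_zero] at hlog
    rw [hFG, dotProduct_zero] at hlin
    have hle := fun e (_ : e ∈ univ) =>
      sub_mul_sub_le_mul_log_sub_log (hF e) (hG e) (hc (hd e)) (hc (tl e))
    have heq := (sum_eq_sum_iff_of_le hle).1 (hlin.symm.trans hlog)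
    exact fun e => eq_of_mul_log_sub_log_le_sub_mul_sub (hF e) (hG e) (hc _) (hc _)
      (heq e (mem_univ e)).ge
  · intro h
    have hw : (fun e => F e * c (hd e) - G e * c (tl e)) = fun e => c (hd e) * (F - G) e := by
      ext e
      rw [Pi.sub_apply, h e]
      ring
    rw [hw, incidenceMatrix_mulVec_comp_mul h, hFG, mul_zero]

end Incidence

def complexMonomial {ι V R : Type*} [Fintype ι] [CommMonoid R] (Γ : Matrix ι V ℕ) (x : ι → R)
    (l : V) : R :=
  ∏ i, x i ^ Γ i l

section Monomial

variable {ι V : Type*} [Fintype ι] (Γ : Matrix ι V ℕ)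

lemma complexMonomial_div {R : Type*} [DivisionCommMonoid R] (x y : ι → R) (l : V) :
    complexMonomial Γ (x / y) l = complexMonomial Γ x l / complexMonomial Γ y l := by
  simp [complexMonomial, div_pow, prod_div_distrib]

lemma complexMonomial_pos {x : ι → ℝ} (hx : ∀ i, 0 < x i) (l : V) : 0 < complexMonomial Γ x l :=
  prod_pos fun i _ => pow_pos (hx i) _

lemma vecMul_log_sub_log_eq_log_complexMonomial_div {x y : ι → ℝ} (hx : ∀ i, 0 < x i)
    (hy : ∀ i, 0 < y i) :
    (fun i => log (x i) - log (y i)) ᵥ* Γ.map (Nat.cast : ℕ → ℝ) =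
      fun l => log (complexMonomial Γ (x / y) l) := by
  have hxy : ∀ i, 0 < (x / y) i := fun i => div_pos (hx i) (hy i)
  ext l
  rw [complexMonomial, log_prod fun i _ => (pow_pos (hxy i) _).ne']
  simp [vecMul, dotProduct, log_pow, log_div (hx _).ne' (hy _).ne', mul_comm]

end Monomial

lemma oneWayFlux_pos {n m r : ℕ} (Γ : Matrix (Fin n) (Fin m) ℕ) (B : Matrix (Fin m) (Fin r) ℕ)
    {k : Fin r → ℝ} {x : Fin n → ℝ} (hk : ∀ e, 0 < k e) (hx : ∀ i, 0 < x i) (e : Fin r) :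
    0 < oneWayFlux Γ B k x e :=
  mul_pos (hk e) (prod_pos fun i _ => pow_pos (hx i) _)

lemma oneWayFlux_submatrix_one {n m r : ℕ} (Γ : Matrix (Fin n) (Fin m) ℕ) (f : Fin r → Fin m)
    (k : Fin r → ℝ) (x : Fin n → ℝ) :
    oneWayFlux Γ ((1 : Matrix (Fin m) (Fin m) ℕ).submatrix id f) k x =
      fun e => k e * complexMonomial Γ x (f e) := by
  ext e
  rw [oneWayFlux, Matrix.mul_submatrix_one_id]
  rfl

lemma oneWayFlux_submatrix_one_eq_mul {n m r : ℕ} (Γ : Matrix (Fin n) (Fin m) ℕ)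
    (f : Fin r → Fin m) (k : Fin r → ℝ) (x : Fin n → ℝ) {y : Fin n → ℝ} (hy : ∀ i, 0 < y i) :
    oneWayFlux Γ ((1 : Matrix (Fin m) (Fin m) ℕ).submatrix id f) k x =
      fun e => oneWayFlux Γ ((1 : Matrix (Fin m) (Fin m) ℕ).submatrix id f) k y e *
        complexMonomial Γ (x / y) (f e) := by
  ext e
  have := (complexMonomial_pos Γ hy (f e)).ne'
  simp only [oneWayFlux_submatrix_one, complexMonomial_div]
  field_simp

/-- If x̃ is a complex-balanced state of a reversible mass-action CRN, then
the set of positive complex-balanced states equals the equilibrium manifold through x̃: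
{x > 0 : B(j⁺(x) − j⁻(x)) = 0} = {x > 0 : Sᵀ(ln x − ln x̃) = 0}. -/
theorem complex_balanced_states_equal_equilibrium_manifold
    {n m r : ℕ}
    (Γ : Matrix (Fin n) (Fin m) ℕ)
    (Bp Bm : Matrix (Fin m) (Fin r) ℕ)
    (hBp01 : ∀ l e, Bp l e = 0 ∨ Bp l e = 1)
    (hBm01 : ∀ l e, Bm l e = 0 ∨ Bm l e = 1)
    (hBpcol : ∀ e, ∃! l, Bp l e = 1)
    (hBmcol : ∀ e, ∃! l, Bm l e = 1)
    (kp km : Fin r → ℝ) (hkp : ∀ e, 0 < kp e) (hkm : ∀ e, 0 < km e)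
    (xt : Fin n → ℝ) (hxt : ∀ i, 0 < xt i)
    (hCB : (Bp.map (Nat.cast : ℕ → ℝ) - Bm.map (Nat.cast : ℕ → ℝ)) *ᵥ
        (oneWayFlux Γ Bp kp xt - oneWayFlux Γ Bm km xt) = 0) :
    {x : Fin n → ℝ | (∀ i, 0 < x i) ∧
        (Bp.map (Nat.cast : ℕ → ℝ) - Bm.map (Nat.cast : ℕ → ℝ)) *ᵥ
          (oneWayFlux Γ Bp kp x - oneWayFlux Γ Bm km x) = 0} =
      {x : Fin n → ℝ | (∀ i, 0 < x i) ∧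
        ((Γ * Bp).map (Nat.cast : ℕ → ℝ) - (Γ * Bm).map (Nat.cast : ℕ → ℝ))ᵀ *ᵥ
          (fun i => Real.log (x i) - Real.log (xt i)) = 0} := by
  have hS : (Γ * Bp).map (Nat.cast : ℕ → ℝ) - (Γ * Bm).map (Nat.cast : ℕ → ℝ) =
      Γ.map (Nat.cast : ℕ → ℝ) * (Bp.map (Nat.cast : ℕ → ℝ) - Bm.map (Nat.cast : ℕ → ℝ)) := by
    rw [Matrix.mul_sub]
    exact congrArg₂ _ (Matrix.map_mul (f := Nat.castRingHom ℝ))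
      (Matrix.map_mul (f := Nat.castRingHom ℝ))
  obtain ⟨hd, rfl⟩ := Matrix.exists_eq_submatrix_one hBp01 hBpcol
  obtain ⟨tl, rfl⟩ := Matrix.exists_eq_submatrix_one hBm01 hBmcol
  rw [map_natCast_submatrix_one_sub] at hCB hS
  rw [map_natCast_submatrix_one_sub, hS]
  refine Set.ext fun x => and_congr_right fun hx => ?_
  have hc : ∀ l, 0 < complexMonomial Γ (x / xt) l :=
    complexMonomial_pos Γ fun i => div_pos (hx i) (hxt i)
  rw [oneWayFlux_submatrix_one_eq_mul Γ hd kp x hxt, oneWayFlux_submatrix_one_eq_mul Γ tl km x hxt]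
  refine (incidenceMatrix_mulVec_eq_zero_iff (oneWayFlux_pos Γ _ hkp hxt)
    (oneWayFlux_pos Γ _ hkm hxt) hCB hc).trans ?_
  rw [mulVec_transpose, ← vecMul_vecMul, vecMul_log_sub_log_eq_log_complexMonomial_div Γ hx hxt,
    log_vecMul_incidenceMatrix_eq_zero_iff hc]
end

section
/- KL divergence is a Lyapunov function for reversible linear dynamics on a graph: let B = B⁺ − B⁻ ∈ {0,±1}^{n×r} be the incidence matrix of a finite graph (each column of B⁺ and of B⁻ has exactly one entry equal to 1, in distinct rows), let k⁺, k⁻ ∈ ℝ_{>0}^r, and define the linear flux j(x) := k⁺ ∘ (B⁺)ᵀx − k⁻ ∘ (B⁻)ᵀx. If x_st ∈ ℝ_{>0}^n is a steady state, i.e., B j(x_st) = 0, then along any differentiable solution x(t) ∈ ℝ_{>0}^n of ẋ = −B j(x), the generalized Kullback–Leibler divergence D[x(t)‖x_st] := Σ_i (x_i(t) ln(x_i(t)/x_{st,i}) − x_i(t) + x_{st,i}) is non-increasing in t. -/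
/-!
The right-hand side `-B j(x)` is `A x` for a matrix `A` with nonnegative off-diagonal entries
(each edge carries mass from one endpoint to the other) and zero column sums. Along `ẋ = A x`
the divergence has derivative `∑ (A x)_i log (x_i / xst_i)`, and `A xst = 0` together with
`log u ≤ u - 1` makes this nonpositive.
-/

open Matrix Finset Real

lemma mul_log_sub_log_le_sub {a b : ℝ} (ha : 0 < a) (hb : 0 < b) :
    b * (log a - log b) ≤ a - b := by
  calc b * (log a - log b) = b * log (a / b) := by rw [log_div ha.ne' hb.ne']
    _ ≤ b * (a / b - 1) := mul_le_mul_of_nonneg_left (log_le_sub_one_of_pos (div_pos ha hb)) hb.le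
    _ = a - b := by field_simp

lemma HasDerivAt.mul_log_div_sub_add {g : ℝ → ℝ} {g' t c : ℝ} (hg : HasDerivAt g g' t)
    (hgt : 0 < g t) (hc : 0 < c) :
    HasDerivAt (fun s => g s * Real.log (g s / c) - g s + c) (g' * Real.log (g t / c)) t := by
  suffices h : ∀ u, 0 < u →
      HasDerivAt (fun u => u * Real.log (u / c) - u + c) (Real.log (u / c)) u from
    ((h _ hgt).comp t hg).congr_deriv (mul_comm _ _)
  intro u hu
  have hlog : HasDerivAt (fun u => Real.log (u / c)) (1 / c / (u / c)) u :=
    ((hasDerivAt_id' u).div_const c).log (div_pos hu hc).ne'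
  refine ((((hasDerivAt_id' u).mul hlog).sub (hasDerivAt_id' u)).add_const c).congr_deriv ?_
  field_simp
  ring

section Generator

variable {ι : Type*} [Fintype ι]

/-- With `W i j = A i j * xst j` and `y = x / xst`, the row sums (`A xst = 0`) and column
sums of `W` vanish, so the sum equals `∑ W i j * y j * (log y i - log y j)`, which is at most
`∑ W i j * (y i - y j) = 0`. -/
lemma sum_mulVec_mul_log_div_nonpos (A : Matrix ι ι ℝ) (hoff : ∀ i j, i ≠ j → 0 ≤ A i j)
    (hcol : ∀ j, ∑ i, A i j = 0) {xst x : ι → ℝ} (hxst : ∀ i, 0 < xst i)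
    (hst : A *ᵥ xst = 0) (hx : ∀ i, 0 < x i) :
    ∑ i, (A *ᵥ x) i * log (x i / xst i) ≤ 0 := by
  set y : ι → ℝ := fun i => x i / xst i
  set W : ι → ι → ℝ := fun i j => A i j * xst j
  have hy : ∀ i, 0 < y i := fun i => div_pos (hx i) (hxst i)
  have hWcol : ∀ j, ∑ i, W i j = 0 := fun j => by simp only [W, ← sum_mul, hcol, zero_mul]
  have hWrow : ∀ i, ∑ j, W i j = 0 := fun i => by simpa [mulVec, dotProduct] using congrFun hst i
  have hAx : ∀ i, (A *ᵥ x) i = ∑ j, W i j * y j := fun i =>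
    sum_congr rfl fun j _ => by simp only [W, y]; field_simp [(hxst j).ne']
  have key : ∀ i j, W i j * (y j * (log (y i) - log (y j))) ≤ W i j * (y i - y j) := by
    intro i j
    rcases eq_or_ne i j with rfl | hij
    · simp
    · exact mul_le_mul_of_nonneg_left (mul_log_sub_log_le_sub (hy i) (hy j))
        (mul_nonneg (hoff i j hij) (hxst j).le)
  calc ∑ i, (A *ᵥ x) i * log (y i)
      = ∑ i, ∑ j, W i j * (y j * (log (y i) - log (y j))) := by
        have h0 : ∑ i, ∑ j, W i j * (y j * log (y j)) = 0 := by
          rw [sum_comm]; simp [← sum_mul, hWcol]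
        simp only [mul_sub, sum_sub_distrib, h0, sub_zero, hAx, sum_mul, mul_assoc]
    _ ≤ ∑ i, ∑ j, W i j * (y i - y j) := sum_le_sum fun i _ => sum_le_sum fun j _ => key i j
    _ = 0 := by
        simp only [mul_sub, sum_sub_distrib, ← sum_mul, hWrow]
        rw [sum_comm]
        simp [← sum_mul, hWcol]

theorem antitone_klDiv_of_hasDerivAt_mulVec (A : Matrix ι ι ℝ)
    (hoff : ∀ i j, i ≠ j → 0 ≤ A i j) (hcol : ∀ j, ∑ i, A i j = 0)
    {xst : ι → ℝ} (hxst : ∀ i, 0 < xst i) (hst : A *ᵥ xst = 0)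
    {x : ℝ → ι → ℝ} (hpos : ∀ t i, 0 < x t i) (hflow : ∀ t, HasDerivAt x (A *ᵥ x t) t) :
    Antitone (fun t => ∑ i, (x t i * log (x t i / xst i) - x t i + xst i)) := by
  have hD : ∀ t, HasDerivAt (fun s => ∑ i, (x s i * log (x s i / xst i) - x s i + xst i))
      (∑ i, (A *ᵥ x t) i * log (x t i / xst i)) t := fun t =>
    HasDerivAt.fun_sum fun i _ =>
      .mul_log_div_sub_add (hasDerivAt_pi.mp (hflow t) i) (hpos t i) (hxst i)
  exact antitone_of_deriv_nonpos (fun t => (hD t).differentiableAt) fun t => by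
    rw [(hD t).deriv]
    exact sum_mulVec_mul_log_div_nonpos A hoff hcol hxst hst (hpos t)

end Generator

section Incidence

variable {ι ε : Type*} {C : Matrix ι ε ℝ}

lemma sum_col_eq_one_of_zero_one [Fintype ι] (h01 : ∀ i e, C i e = 0 ∨ C i e = 1)
    (hcol : ∀ e, ∃! i, C i e = 1) (e : ε) : ∑ i, C i e = 1 := by
  obtain ⟨i₀, hi₀, huniq⟩ := hcol e
  rw [sum_eq_single i₀ (fun i _ hi => (h01 i e).resolve_right (mt (huniq i) hi))
    (by simp)]
  exact hi₀

lemma mul_eq_zero_of_zero_one_of_ne (h01 : ∀ i e, C i e = 0 ∨ C i e = 1)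
    (hcol : ∀ e, ∃! i, C i e = 1) {i j : ι} (hij : i ≠ j) (e : ε) : C i e * C j e = 0 := by
  rcases h01 i e with hi | hi
  · rw [hi, zero_mul]
  rcases h01 j e with hj | hj
  · rw [hj, mul_zero]
  exact absurd (ExistsUnique.unique (hcol e) hi hj) hij

end Incidence

section Graph

variable {ι ε : Type*} [Fintype ε] [DecidableEq ε]

def linearFluxGenerator (Bp Bm : Matrix ι ε ℝ) (kp km : ε → ℝ) : Matrix ι ι ℝ :=
  -((Bp - Bm) * (diagonal kp * Bpᵀ - diagonal km * Bmᵀ))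

lemma linearFluxGenerator_mulVec [Fintype ι] (Bp Bm : Matrix ι ε ℝ) (kp km : ε → ℝ)
    (v : ι → ℝ) :
    linearFluxGenerator Bp Bm kp km *ᵥ v =
      -((Bp - Bm) *ᵥ fun e => kp e * (Bpᵀ *ᵥ v) e - km e * (Bmᵀ *ᵥ v) e) := by
  rw [linearFluxGenerator, neg_mulVec, ← mulVec_mulVec]
  congr 2
  ext e
  simp [sub_mulVec, ← mulVec_mulVec, mulVec_diagonal]

lemma linearFluxGenerator_apply (Bp Bm : Matrix ι ε ℝ) (kp km : ε → ℝ) (i j : ι) :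
    linearFluxGenerator Bp Bm kp km i j =
      ∑ e, (kp e * (Bm i e * Bp j e) + km e * (Bp i e * Bm j e)
        - kp e * (Bp i e * Bp j e) - km e * (Bm i e * Bm j e)) := by
  simp only [linearFluxGenerator, Matrix.neg_apply, mul_apply, Matrix.sub_apply, diagonal_apply,
    transpose_apply, ite_mul, zero_mul, sum_ite_eq, mem_univ, ↓reduceIte, ← sum_neg_distrib]
  exact sum_congr rfl fun e _ => by ring

lemma sum_linearFluxGenerator_apply_eq_zero [Fintype ι] {Bp Bm : Matrix ι ε ℝ}
    (hsum : ∀ e, ∑ i, Bp i e = ∑ i, Bm i e) (kp km : ε → ℝ) (j : ι) :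
    ∑ i, linearFluxGenerator Bp Bm kp km i j = 0 := by
  simp only [linearFluxGenerator, Matrix.neg_apply, mul_apply, sum_neg_distrib, neg_eq_zero]
  rw [sum_comm]
  simp [← sum_mul, sum_sub_distrib, hsum]

lemma linearFluxGenerator_nonneg_of_ne {Bp Bm : Matrix ι ε ℝ}
    (hBp01 : ∀ i e, Bp i e = 0 ∨ Bp i e = 1) (hBm01 : ∀ i e, Bm i e = 0 ∨ Bm i e = 1)
    (hBpcol : ∀ e, ∃! i, Bp i e = 1) (hBmcol : ∀ e, ∃! i, Bm i e = 1)
    {kp km : ε → ℝ} (hkp : ∀ e, 0 ≤ kp e) (hkm : ∀ e, 0 ≤ km e) {i j : ι} (hij : i ≠ j) :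
    0 ≤ linearFluxGenerator Bp Bm kp km i j := by
  have nonneg (C : Matrix ι ε ℝ) (h01 : ∀ i e, C i e = 0 ∨ C i e = 1) i e : 0 ≤ C i e := by
    rcases h01 i e with h | h <;> norm_num [h]
  rw [linearFluxGenerator_apply]
  refine sum_nonneg fun e _ => ?_
  rw [mul_eq_zero_of_zero_one_of_ne hBp01 hBpcol hij,
    mul_eq_zero_of_zero_one_of_ne hBm01 hBmcol hij, mul_zero, mul_zero, sub_zero, sub_zero]
  exact add_nonneg (mul_nonneg (hkp e) (mul_nonneg (nonneg Bm hBm01 i e) (nonneg Bp hBp01 j e)))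
    (mul_nonneg (hkm e) (mul_nonneg (nonneg Bp hBp01 i e) (nonneg Bm hBm01 j e)))

end Graph

theorem KL_lyapunov_for_reversible_linear_dynamics_general
    {n r : ℕ}
    (Bp Bm : Matrix (Fin n) (Fin r) ℝ)
    (hBp01 : ∀ i e, Bp i e = 0 ∨ Bp i e = 1)
    (hBm01 : ∀ i e, Bm i e = 0 ∨ Bm i e = 1)
    (hBpcol : ∀ e, ∃! i, Bp i e = 1)
    (hBmcol : ∀ e, ∃! i, Bm i e = 1)
    (kp km : Fin r → ℝ) (hkp : ∀ e, 0 < kp e) (hkm : ∀ e, 0 < km e)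
    (xst : Fin n → ℝ) (hxst : ∀ i, 0 < xst i)
    (hsteady : (Bp - Bm) *ᵥ
      (fun e => kp e * (Bpᵀ *ᵥ xst) e - km e * (Bmᵀ *ᵥ xst) e) = 0)
    (x : ℝ → Fin n → ℝ)
    (hpos : ∀ t : ℝ, ∀ i, 0 < x t i)
    (hflow : ∀ t : ℝ,
      HasDerivAt x
        (-((Bp - Bm) *ᵥ
          fun e => kp e * (Bpᵀ *ᵥ x t) e - km e * (Bmᵀ *ᵥ x t) e)) t) :
    Antitone (fun t => ∑ i, (x t i * Real.log (x t i / xst i) - x t i + xst i)) := by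
  have hA := linearFluxGenerator_mulVec Bp Bm kp km
  have hsum e : ∑ i, Bp i e = ∑ i, Bm i e := by
    rw [sum_col_eq_one_of_zero_one hBp01 hBpcol, sum_col_eq_one_of_zero_one hBm01 hBmcol]
  refine antitone_klDiv_of_hasDerivAt_mulVec (linearFluxGenerator Bp Bm kp km)
    (fun i j => linearFluxGenerator_nonneg_of_ne hBp01 hBm01 hBpcol hBmcol
      (fun e => (hkp e).le) (fun e => (hkm e).le))
    (sum_linearFluxGenerator_apply_eq_zero hsum kp km) hxst ?_ hpos fun t => ?_
  · rw [hA, hsteady, neg_zero]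
  · rw [hA]
    exact hflow t

/-- KL divergence is a Lyapunov function for reversible linear dynamics on a
graph: if x_st > 0 is a steady state of ẋ = −B j(x) with linear flux
j(x) = k⁺ ∘ (B⁺)ᵀx − k⁻ ∘ (B⁻)ᵀx, then t ↦ D[x(t)‖x_st] is non-increasing along any
positive solution. -/
theorem KL_lyapunov_for_reversible_linear_dynamics
    {n r : ℕ}
    (Bp Bm : Matrix (Fin n) (Fin r) ℝ)
    (hBp01 : ∀ i e, Bp i e = 0 ∨ Bp i e = 1)
    (hBm01 : ∀ i e, Bm i e = 0 ∨ Bm i e = 1)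
    (hBpcol : ∀ e, ∃! i, Bp i e = 1)
    (hBmcol : ∀ e, ∃! i, Bm i e = 1)
    (hdistinct : ∀ e i, ¬(Bp i e = 1 ∧ Bm i e = 1))
    (kp km : Fin r → ℝ) (hkp : ∀ e, 0 < kp e) (hkm : ∀ e, 0 < km e)
    (xst : Fin n → ℝ) (hxst : ∀ i, 0 < xst i)
    (hsteady : (Bp - Bm) *ᵥ
      (fun e => kp e * (Bpᵀ *ᵥ xst) e - km e * (Bmᵀ *ᵥ xst) e) = 0)
    (x : ℝ → Fin n → ℝ)
    (hpos : ∀ t : ℝ, ∀ i, 0 < x t i)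
    (hflow : ∀ t : ℝ,
      HasDerivAt x
        (-((Bp - Bm) *ᵥ
          fun e => kp e * (Bpᵀ *ᵥ x t) e - km e * (Bmᵀ *ᵥ x t) e)) t) :
    Antitone (fun t => ∑ i, (x t i * Real.log (x t i / xst i) - x t i + xst i)) :=
  KL_lyapunov_for_reversible_linear_dynamics_general Bp Bm hBp01 hBm01 hBpcol hBmcol kp km hkp hkm
    xst hxst hsteady x hpos hflow
end
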